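/- arXiv:2307.05332 — 6 statements merged into one kernel-verified Lean document; each statement's English description precedes it below -/
import Mathlib

section
/- Let G = (V,E) be a graph admitting a nested family of optimal sets, i.e., there is a total order O on V such that for each m, the initial segment of O of size m maximizes the number of induced edges among all m-element subsets. Then δ_G(i+1) - δ_G(i) ≤ 1 for all i with 1 ≤ i < |V|. -/
open Finset

/-- Number of edges of `G` with both endpoints in `A`. -/
def edgesIn {V : Type*} (G : SimpleGraph V) [Fintype V] [DecidableEq V]
    [DecidableRel G.Adj] (A : Finset V) : ℕ :=
  (G.edgeFinset.filter (fun e => ∀ v ∈ e, v ∈ A)).card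

/-- `maxEdges G m` is the maximum number of induced edges over all `m`-element vertex sets. -/
def maxEdges {V : Type*} (G : SimpleGraph V) [Fintype V] [DecidableEq V]
    [DecidableRel G.Adj] (m : ℕ) : ℕ :=
  ((Finset.univ : Finset V).powersetCard m).sup (fun A => edgesIn G A)

/-- The `δ`-sequence of `G` (1-indexed, as an integer). -/
def deltaSeq {V : Type*} (G : SimpleGraph V) [Fintype V] [DecidableEq V]
    [DecidableRel G.Adj] (m : ℕ) : ℤ :=
  (maxEdges G m : ℤ) - (maxEdges G (m - 1) : ℤ)

lemma edgesIn_insert {V : Type*} (G : SimpleGraph V) [Fintype V] [DecidableEq V]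
    [DecidableRel G.Adj] (v : V) (A : Finset V) (hv : v ∉ A) :
    edgesIn G (insert v A) = edgesIn G A + (A.filter (G.Adj v)).card := by
  classical
  unfold edgesIn
  have hsplit : (G.edgeFinset.filter (fun e => ∀ w ∈ e, w ∈ insert v A))
      = (G.edgeFinset.filter (fun e => ∀ w ∈ e, w ∈ A))
        ∪ (G.edgeFinset.filter (fun e => v ∈ e ∧ ∀ w ∈ e, w ∈ insert v A)) := by
    ext e
    simp only [mem_union, mem_filter]
    constructor
    · rintro ⟨he, hsub⟩
      by_cases hve : v ∈ e
      · exact Or.inr ⟨he, hve, hsub⟩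
      · refine Or.inl ⟨he, fun w hw => ?_⟩
        rcases mem_insert.mp (hsub w hw) with h | h
        · exact absurd (h ▸ hw) hve
        · exact h
    · rintro (⟨he, hsub⟩ | ⟨he, _, hsub⟩)
      · exact ⟨he, fun w hw => mem_insert_of_mem (hsub w hw)⟩
      · exact ⟨he, hsub⟩
  have hdisj : Disjoint (G.edgeFinset.filter (fun e => ∀ w ∈ e, w ∈ A))
      (G.edgeFinset.filter (fun e => v ∈ e ∧ ∀ w ∈ e, w ∈ insert v A)) := by
    rw [Finset.disjoint_left]
    rintro e he1 he2
    simp only [mem_filter] at he1 he2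
    exact hv (he1.2 v he2.2.1)
  rw [hsplit, card_union_of_disjoint hdisj]
  congr 1
  refine (Finset.card_bij (fun w _ => s(v, w)) ?_ ?_ ?_).symm
  · intro w hw
    simp only [mem_filter] at hw ⊢
    refine ⟨SimpleGraph.mem_edgeFinset.mpr hw.2, Sym2.mem_mk_left v w, ?_⟩
    intro u hu
    rcases Sym2.mem_iff.mp hu with h | h
    · exact h ▸ mem_insert_self v A
    · exact h ▸ mem_insert_of_mem hw.1
  · intro w hw w' hw' h
    simp only [mem_filter] at hw hw'
    rcases Sym2.eq_iff.mp h with ⟨_, h2⟩ | ⟨h1, h2⟩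
    · exact h2
    · exact absurd (h1 ▸ hw'.1) hv
  · intro e he
    simp only [mem_filter] at he
    obtain ⟨he1, hve, hsub⟩ := he
    induction e using Sym2.ind with
    | _ a b =>
      have hadj : G.Adj a b := SimpleGraph.mem_edgeFinset.mp he1
      rcases Sym2.mem_iff.mp hve with h | h
      · subst h
        have hb : b ∈ A := by
          rcases mem_insert.mp (hsub b (Sym2.mem_mk_right v b)) with h | h
          · exact absurd (h ▸ hadj) (G.irrefl)
          · exact h
        exact ⟨b, mem_filter.mpr ⟨hb, hadj⟩, rfl⟩
      · subst h
        have ha : a ∈ A := by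
          rcases mem_insert.mp (hsub a (Sym2.mem_mk_left a v)) with h | h
          · exact absurd (h ▸ hadj) (G.irrefl)
          · exact h
        exact ⟨a, mem_filter.mpr ⟨ha, hadj.symm⟩, Sym2.eq_swap⟩

lemma edgesIn_le_maxEdges {V : Type*} (G : SimpleGraph V) [Fintype V] [DecidableEq V]
    [DecidableRel G.Adj] (A : Finset V) :
    edgesIn G A ≤ maxEdges G A.card :=
  Finset.le_sup (Finset.mem_powersetCard.mpr ⟨subset_univ A, rfl⟩)

lemma seg_card {n m : ℕ} (hm : m ≤ n) :
    ((Finset.univ : Finset (Fin n)).filter (fun j : Fin n => (j : ℕ) < m)).card = m := by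
  have himg : ((Finset.univ : Finset (Fin n)).filter (fun j : Fin n => (j : ℕ) < m)).image
      (fun j : Fin n => (j : ℕ)) = Finset.range m := by
    ext b
    simp only [mem_image, mem_filter, mem_univ, true_and, mem_range]
    constructor
    · rintro ⟨j, hj, rfl⟩; exact hj
    · intro hb; exact ⟨⟨b, lt_of_lt_of_le hb hm⟩, hb, rfl⟩
  calc ((Finset.univ : Finset (Fin n)).filter (fun j : Fin n => (j : ℕ) < m)).card
      = (((Finset.univ : Finset (Fin n)).filter (fun j : Fin n => (j : ℕ) < m)).image
          (fun j : Fin n => (j : ℕ))).card :=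
        (Finset.card_image_of_injective _ Fin.val_injective).symm
    _ = m := by rw [himg, card_range]

/-- The initial segment of size `m` of the order `ord`. -/
def seg {V : Type*} [Fintype V] [DecidableEq V] (ord : Fin (Fintype.card V) ≃ V) (m : ℕ) :
    Finset V :=
  (Finset.univ.filter (fun j : Fin (Fintype.card V) => (j : ℕ) < m)).image ord

lemma seg_notmem {V : Type*} [Fintype V] [DecidableEq V] (ord : Fin (Fintype.card V) ≃ V)
    (k : ℕ) (hk : k < Fintype.card V) (m : ℕ) (hmk : m ≤ k) : ord ⟨k, hk⟩ ∉ seg ord m := by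
  intro hmem
  simp only [seg, mem_image, mem_filter, mem_univ, true_and] at hmem
  obtain ⟨j, hj, hje⟩ := hmem
  have hjk : j = ⟨k, hk⟩ := ord.injective hje
  rw [hjk] at hj
  simp only at hj
  omega

lemma seg_succ {V : Type*} [Fintype V] [DecidableEq V] (ord : Fin (Fintype.card V) ≃ V)
    (m : ℕ) (h : m < Fintype.card V) : seg ord (m + 1) = insert (ord ⟨m, h⟩) (seg ord m) := by
  have hset : (Finset.univ.filter (fun j : Fin (Fintype.card V) => (j : ℕ) < m + 1))
      = insert (⟨m, h⟩ : Fin (Fintype.card V))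
          (Finset.univ.filter (fun j : Fin (Fintype.card V) => (j : ℕ) < m)) := by
    ext j
    simp [Nat.lt_succ_iff_lt_or_eq, Fin.ext_iff, or_comm]
    omega
  simp only [seg, hset, image_insert]

lemma seg_card' {V : Type*} [Fintype V] [DecidableEq V] (ord : Fin (Fintype.card V) ≃ V)
    (m : ℕ) (hm : m ≤ Fintype.card V) : (seg ord m).card = m := by
  rw [seg, card_image_of_injective _ ord.injective, seg_card hm]

set_option maxHeartbeats 1000000 in
/-- if `G` admits an optimal (nested) order, then consecutive
differences of the `δ`-sequence are at most `1`. -/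
theorem deltaSeq_step_le_one {V : Type*} (G : SimpleGraph V) [Fintype V] [DecidableEq V]
    [DecidableRel G.Adj] (ord : Fin (Fintype.card V) ≃ V)
    (hopt : ∀ m : ℕ, m ≤ Fintype.card V →
      edgesIn G ((Finset.univ.filter (fun j : Fin (Fintype.card V) => (j : ℕ) < m)).image ord)
        = maxEdges G m) :
    ∀ i : ℕ, 1 ≤ i → i < Fintype.card V → deltaSeq G (i + 1) - deltaSeq G i ≤ 1 := by
  intro i hi1 hin
  have hopt' : ∀ m : ℕ, m ≤ Fintype.card V → edgesIn G (seg ord m) = maxEdges G m := by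
    intro m hm
    simp only [seg]
    exact hopt m hm
  have him1 : i - 1 < Fintype.card V := lt_of_le_of_lt (Nat.sub_le i 1) hin
  set v0 : V := ord ⟨i - 1, him1⟩ with hv0def
  set v1 : V := ord ⟨i, hin⟩ with hv1def
  have hv0 : v0 ∉ seg ord (i - 1) := seg_notmem ord (i - 1) him1 (i - 1) le_rfl
  have hv1i : v1 ∉ seg ord i := seg_notmem ord i hin i le_rfl
  have hv1 : v1 ∉ seg ord (i - 1) := seg_notmem ord i hin (i - 1) (Nat.sub_le i 1)
  have e_i : seg ord i = insert v0 (seg ord (i - 1)) := by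
    have h := seg_succ ord (i - 1) him1
    rwa [show i - 1 + 1 = i by omega] at h
  have e_i1 : seg ord (i + 1) = insert v1 (seg ord i) := seg_succ ord i hin
  have A := edgesIn_insert G v0 (seg ord (i - 1)) hv0
  rw [← e_i] at A
  have B := edgesIn_insert G v1 (seg ord i) hv1i
  rw [← e_i1] at B
  have C := edgesIn_insert G v1 (seg ord (i - 1)) hv1
  have hcardins : (insert v1 (seg ord (i - 1))).card = i := by
    rw [card_insert_of_notMem hv1, seg_card' ord (i - 1) (le_of_lt him1)]
    omega
  have hle : edgesIn G (insert v1 (seg ord (i - 1))) ≤ maxEdges G i := by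
    have h := edgesIn_le_maxEdges G (insert v1 (seg ord (i - 1)))
    rwa [hcardins] at h
  rw [← hopt' i (le_of_lt hin)] at hle
  have hd1 : ((seg ord i).filter (G.Adj v1)).card
      ≤ ((seg ord (i - 1)).filter (G.Adj v1)).card + 1 := by
    have hsub : (seg ord i).filter (G.Adj v1)
        ⊆ insert v0 ((seg ord (i - 1)).filter (G.Adj v1)) := by
      rw [e_i, filter_insert]
      split_ifs
      · exact Finset.Subset.rfl
      · exact subset_insert _ _
    calc ((seg ord i).filter (G.Adj v1)).card
        ≤ (insert v0 ((seg ord (i - 1)).filter (G.Adj v1))).card := card_le_card hsub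
      _ ≤ ((seg ord (i - 1)).filter (G.Adj v1)).card + 1 := card_insert_le _ _
  have hma : maxEdges G (i - 1) = edgesIn G (seg ord (i - 1)) :=
    (hopt' (i - 1) (le_of_lt him1)).symm
  have hmb : maxEdges G i = edgesIn G (seg ord i) := (hopt' i (le_of_lt hin)).symm
  have hmc : maxEdges G (i + 1) = edgesIn G (seg ord (i + 1)) := (hopt' (i + 1) hin).symm
  simp only [deltaSeq, Nat.add_sub_cancel]
  omega
end

section
/- Let G be the disjoint union of s copies of the complete graph K_i. Then the δ-sequence of G is the concatenation of s copies of (0, 1, ..., i-1); that is, I_G(m) achieves its maximum on unions of complete cliques plus an initial part of a clique, and δ_G(qi + r) = r - 1 for the appropriate decomposition (concretely, δ_G(m) = (m-1) mod i for 1 ≤ m ≤ si). -/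
open Finset

/-- The disjoint union of `s` copies of the complete graph `K_i`. -/
def cliqueUnion (s i : ℕ) : SimpleGraph (Fin s × Fin i) where
  Adj p q := p.1 = q.1 ∧ p.2 ≠ q.2
  symm := ⟨fun p q h => ⟨h.1.symm, h.2.symm⟩⟩
  loopless := ⟨fun p h => h.2 rfl⟩

instance (s i : ℕ) : DecidableRel (cliqueUnion s i).Adj :=
  fun p q => decidable_of_iff (p.1 = q.1 ∧ p.2 ≠ q.2) Iff.rfl

namespace DeltaAux

lemma choose_two_succ (n : ℕ) : (n+1).choose 2 = n.choose 2 + n := by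
  show (n+1).choose (1+1) = _
  rw [Nat.choose_succ_succ]
  simp [Nat.choose_one_right, Nat.add_comm]

lemma choose_two_add (x y : ℕ) : (x+y).choose 2 = x.choose 2 + y.choose 2 + x*y := by
  induction y with
  | zero => simp
  | succ y ih =>
    rw [← Nat.add_assoc, choose_two_succ, ih, choose_two_succ]
    ring

/-- The conjectured maximum edge count. -/
def f (i m : ℕ) : ℕ := (m / i) * i.choose 2 + (m % i).choose 2

lemma f_eq {i : ℕ} (hi : 0 < i) (q r : ℕ) (hr : r < i) :
    f i (q*i + r) = q * i.choose 2 + r.choose 2 := by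
  have h : q*i + r = r + i*q := by ring
  unfold f
  rw [h, Nat.add_mul_div_left _ _ hi, Nat.add_mul_mod_self_left,
    Nat.div_eq_of_lt hr, Nat.mod_eq_of_lt hr]
  ring

lemma exists_qr {i : ℕ} (hi : 0 < i) (t : ℕ) : ∃ q r, r < i ∧ t = q*i + r := by
  refine ⟨t / i, t % i, Nat.mod_lt t hi, ?_⟩
  rw [Nat.mul_comm]
  exact (Nat.div_add_mod t i).symm

lemma mod_of_eq {i q r : ℕ} (hi : 0 < i) (hr : r < i) : (q*i + r) % i = r := by
  rw [Nat.add_comm, Nat.add_mul_mod_self_right, Nat.mod_eq_of_lt hr]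

lemma f_succ {i : ℕ} (hi : 0 < i) (t : ℕ) : f i (t+1) = f i t + t % i := by
  obtain ⟨q, r, hr, ht⟩ := exists_qr hi t
  subst ht
  rw [mod_of_eq hi hr, f_eq hi q r hr]
  rcases Nat.lt_or_ge (r+1) i with h | h
  · have h2 : q*i + r + 1 = q*i + (r+1) := by omega
    rw [h2, f_eq hi q (r+1) h, choose_two_succ]
    ring
  · have hri : r + 1 = i := by omega
    have h2 : q*i + r + 1 = (q+1)*i + 0 := by
      have : (q+1)*i = q*i + i := by ring
      omega
    rw [h2, f_eq hi (q+1) 0 hi]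
    have : i.choose 2 = r.choose 2 + r := by rw [← hri, choose_two_succ]
    simp [this]
    ring

lemma ineq_core (a b d : ℕ) (hb : b ≤ a) :
    (b+d).choose 2 + a.choose 2 ≤ (a+d).choose 2 + b.choose 2 := by
  rw [choose_two_add, choose_two_add]
  have := Nat.mul_le_mul_right d hb
  omega

lemma f_add_le {i : ℕ} (hi : 0 < i) {a : ℕ} (ha : a ≤ i) (t : ℕ) :
    f i t + a.choose 2 ≤ f i (t + a) := by
  obtain ⟨q, r, hr, ht⟩ := exists_qr hi t
  subst ht
  rw [f_eq hi q r hr]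
  rcases Nat.lt_or_ge (r + a) i with h | h
  · have h2 : q*i + r + a = q*i + (r+a) := by omega
    rw [h2, f_eq hi q (r+a) h, choose_two_add]
    omega
  · set b := r + a - i with hb
    have hbi : b < i := by omega
    have h2 : q*i + r + a = (q+1)*i + b := by
      have : (q+1)*i = q*i + i := by ring
      omega
    rw [h2, f_eq hi (q+1) b hbi]
    have hqq : (q+1) * i.choose 2 = q * i.choose 2 + i.choose 2 := by ring
    rw [hqq]
    have core : r.choose 2 + a.choose 2 ≤ i.choose 2 + b.choose 2 := by
      set d := i - a with hd
      have hia : i = a + d := by omega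
      have hrb : r = b + d := by omega
      rw [hia, hrb]
      exact ineq_core a b d (by omega)
    omega

lemma sum_choose_le {i : ℕ} (hi : 0 < i) {J : Type*} [DecidableEq J] :
    ∀ (l : Finset J) (g : J → ℕ), (∀ j ∈ l, g j ≤ i) →
      ∑ j ∈ l, (g j).choose 2 ≤ f i (∑ j ∈ l, g j) := by
  intro l
  induction l using Finset.induction_on with
  | empty => intro g hg; simp [f]
  | insert a l ha ih =>
    intro g hg
    rw [Finset.sum_insert ha, Finset.sum_insert ha]
    calc (g a).choose 2 + ∑ j ∈ l, (g j).choose 2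
        ≤ (g a).choose 2 + f i (∑ j ∈ l, g j) := by
          exact Nat.add_le_add_left (ih g (fun j hj => hg j (Finset.mem_insert_of_mem hj))) _
      _ ≤ f i ((∑ j ∈ l, g j) + g a) := by
          rw [Nat.add_comm ((g a).choose 2)]
          exact f_add_le hi (hg a (Finset.mem_insert_self a l)) _
      _ = f i (g a + ∑ j ∈ l, g j) := by rw [Nat.add_comm]

lemma f_small {i m : ℕ} (hi : 0 < i) (h : m ≤ i) : f i m = m.choose 2 := by
  rcases Nat.lt_or_ge m i with h' | h'
  · have := f_eq hi 0 m h'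
    simpa using this
  · have hmi : m = i := by omega
    subst hmi
    have := f_eq hi 1 0 hi
    simpa using this

lemma f_add_i {i m : ℕ} (hi : 0 < i) (h : i ≤ m) :
    f i m = i.choose 2 + f i (m - i) := by
  obtain ⟨q, r, hr, ht⟩ := exists_qr hi (m - i)
  have hm : m = (q+1)*i + r := by
    have h2 : (q+1)*i = q*i + i := by ring
    omega
  rw [ht, hm, f_eq hi (q+1) r hr, f_eq hi q r hr]
  ring

lemma sum_min_card {i : ℕ} (hi : 0 < i) :
    ∀ (s m : ℕ), m ≤ s*i → ∑ j ∈ Finset.range s, min i (m - j*i) = m := by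
  intro s
  induction s with
  | zero => intro m hm; simp at hm; simp [hm]
  | succ s ih =>
    intro m hm
    rw [Finset.sum_range_succ']
    have hshift : ∑ j ∈ Finset.range s, min i (m - (j+1)*i)
        = ∑ j ∈ Finset.range s, min i ((m - i) - j*i) := by
      refine Finset.sum_congr rfl fun j _ => ?_
      have : (j+1)*i = j*i + i := by ring
      rw [this]
      omega
    rw [hshift]
    rcases Nat.lt_or_ge m i with h | h
    · have : ∀ j ∈ Finset.range s, min i ((m - i) - j*i) = 0 := by
        intro j _
        have : m - i = 0 := by omega
        simp [this]
      rw [Finset.sum_congr rfl this]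
      simp
      omega
    · rw [ih (m - i) (by
        have h2 : (s+1)*i = s*i + i := by ring
        omega)]
      simp
      omega

lemma sum_min_f {i : ℕ} (hi : 0 < i) :
    ∀ (s m : ℕ), m ≤ s*i → ∑ j ∈ Finset.range s, (min i (m - j*i)).choose 2 = f i m := by
  intro s
  induction s with
  | zero => intro m hm; simp at hm; simp [hm, f]
  | succ s ih =>
    intro m hm
    rw [Finset.sum_range_succ']
    have hshift : ∑ j ∈ Finset.range s, (min i (m - (j+1)*i)).choose 2
        = ∑ j ∈ Finset.range s, (min i ((m - i) - j*i)).choose 2 := by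
      refine Finset.sum_congr rfl fun j _ => ?_
      congr 1
      have : (j+1)*i = j*i + i := by ring
      rw [this]
      omega
    rw [hshift]
    rcases Nat.lt_or_ge m i with h | h
    · have hz : ∀ j ∈ Finset.range s, (min i ((m - i) - j*i)).choose 2 = 0 := by
        intro j _
        have : m - i = 0 := by omega
        simp [this]
      rw [Finset.sum_congr rfl hz]
      rw [f_small hi (le_of_lt h)]
      have h0 : min i (m - 0*i) = m := by omega
      rw [h0]
      simp
    · rw [ih (m - i) (by
        have h2 : (s+1)*i = s*i + i := by ring
        omega)]
      have h0 : min i (m - 0*i) = i := by omega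
      rw [h0, f_add_i hi h]
      ring

section Graph

variable {α : Type*} [DecidableEq α]

lemma card_sym2_offdiag (B : Finset α) :
    (B.sym2.filter fun e => ¬ e.IsDiag).card = B.card.choose 2 := by
  have h1 : (B.sym2.filter fun e => e.IsDiag) = B.image Sym2.diag := by
    ext e
    induction e with
    | _ u v =>
      simp only [Finset.mem_filter, Finset.mk_mem_sym2_iff, Finset.mem_image,
        Sym2.isDiag_iff_proj_eq]
      constructor
      · rintro ⟨⟨hu, hv⟩, huv⟩
        exact ⟨u, hu, by simp [Sym2.diag, huv]⟩
      · rintro ⟨x, hx, hxe⟩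
        have : x = u ∧ x = v := by
          rw [Sym2.diag] at hxe
          rw [Sym2.eq_iff] at hxe
          tauto
        obtain ⟨h1, h2⟩ := this
        subst h1; subst h2
        exact ⟨⟨hx, hx⟩, rfl⟩
  have h2 : (B.sym2.filter fun e => e.IsDiag).card = B.card := by
    rw [h1, Finset.card_image_of_injective _ Sym2.diag_injective]
  have h3 := Finset.card_filter_add_card_filter_not
    (s := B.sym2) (p := fun e => e.IsDiag)
  rw [Finset.card_sym2, h2] at h3
  have h4 := choose_two_succ B.card
  omega

end Graph

variable {s i : ℕ}

/-- Clique index of a symmetric pair. -/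
def cIdx (s i : ℕ) : Sym2 (Fin s × Fin i) → Fin s :=
  Sym2.lift ⟨fun p q => min p.1 q.1, fun p q => by simp [min_comm]⟩

lemma edgesIn_decomp (A : Finset (Fin s × Fin i)) :
    edgesIn (cliqueUnion s i) A
      = ∑ j : Fin s, ((A.filter (fun p => p.1 = j)).card).choose 2 := by
  unfold edgesIn
  rw [Finset.card_eq_sum_card_fiberwise
    (f := cIdx s i) (t := Finset.univ) (fun e _ => Finset.mem_univ _)]
  refine Finset.sum_congr rfl fun j _ => ?_
  have hset : (((cliqueUnion s i).edgeFinset.filter (fun e => ∀ v ∈ e, v ∈ A)).filter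
      (fun e => cIdx s i e = j))
      = (A.filter (fun p => p.1 = j)).sym2.filter (fun e => ¬ e.IsDiag) := by
    ext e
    induction e with
    | _ u v =>
      rw [Finset.mem_filter, Finset.mem_filter]
      simp only [Finset.mem_filter, SimpleGraph.mem_edgeFinset, SimpleGraph.mem_edgeSet,
        Finset.mk_mem_sym2_iff, Sym2.isDiag_iff_proj_eq, cIdx, Sym2.lift_mk, Sym2.mem_iff,
        forall_eq_or_imp, forall_eq]
      show (((cliqueUnion s i).Adj u v ∧ u ∈ A ∧ v ∈ A) ∧ min u.1 v.1 = j)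
        ↔ ((u ∈ A ∧ u.1 = j) ∧ (v ∈ A ∧ v.1 = j)) ∧ ¬ u = v
      constructor
      · rintro ⟨⟨⟨h1, h2⟩, hu, hv⟩, hmin⟩
        rw [h1, min_self] at hmin
        refine ⟨⟨⟨hu, by rw [h1]; exact hmin⟩, ⟨hv, hmin⟩⟩, ?_⟩
        intro h; exact h2 (by rw [h])
      · rintro ⟨⟨⟨hu, hju⟩, hv, hjv⟩, hne⟩
        have h1 : u.1 = v.1 := by rw [hju, hjv]
        refine ⟨⟨⟨h1, ?_⟩, hu, hv⟩, by rw [h1, min_self, hjv]⟩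
        intro h2
        exact hne (Prod.ext h1 h2)
  rw [hset, card_sym2_offdiag]

lemma fiber_card_le (A : Finset (Fin s × Fin i)) (j : Fin s) :
    (A.filter (fun p => p.1 = j)).card ≤ i := by
  have := Finset.card_le_card_of_injOn (f := Prod.snd)
    (s := A.filter (fun p => p.1 = j)) (t := Finset.univ)
    (fun p _ => Finset.mem_univ _) ?_
  · simpa using this
  · intro p hp q hq hpq
    simp only [Finset.coe_filter, Set.mem_setOf_eq] at hp hq
    exact Prod.ext (hp.2.trans hq.2.symm) hpq

lemma card_fiberwise (A : Finset (Fin s × Fin i)) :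
    A.card = ∑ j : Fin s, (A.filter (fun p => p.1 = j)).card :=
  Finset.card_eq_sum_card_fiberwise (fun p _ => Finset.mem_univ p.1)

/-- The canonical optimal vertex set. -/
def Am (s i m : ℕ) : Finset (Fin s × Fin i) :=
  Finset.univ.filter (fun p => (p.1 : ℕ)*i + (p.2 : ℕ) < m)

lemma card_fin_filter_lt (i c : ℕ) :
    (Finset.univ.filter fun k : Fin i => (k : ℕ) < c).card = min i c := by
  rw [← Finset.card_image_of_injective _ Fin.val_injective]
  have : (Finset.univ.filter fun k : Fin i => (k : ℕ) < c).image Fin.val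
      = Finset.range (min i c) := by
    ext n
    simp only [Finset.mem_image, Finset.mem_filter, Finset.mem_univ, true_and,
      Finset.mem_range]
    constructor
    · rintro ⟨a, ha, rfl⟩
      have := a.isLt
      omega
    · intro hn
      exact ⟨⟨n, by omega⟩, by simpa using (by omega : n < c), rfl⟩
  rw [this, Finset.card_range]

lemma Am_fiber (m : ℕ) (j : Fin s) :
    ((Am s i m).filter (fun p => p.1 = j)).card = min i (m - (j : ℕ)*i) := by
  have himg : (Am s i m).filter (fun p => p.1 = j)
      = (Finset.univ.filter fun k : Fin i => (k : ℕ) < m - (j : ℕ)*i).image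
          (fun k => (j, k)) := by
    ext ⟨a, b⟩
    simp only [Am, Finset.mem_filter, Finset.mem_univ, true_and, Finset.mem_image,
      Prod.mk.injEq]
    constructor
    · rintro ⟨hlt, rfl⟩
      exact ⟨b, by omega, rfl, rfl⟩
    · rintro ⟨k, hk, rfl, rfl⟩
      exact ⟨by omega, rfl⟩
  rw [himg, Finset.card_image_of_injective _ (fun x y h => by simpa using h),
    card_fin_filter_lt]

lemma maxEdges_eq (hi : 0 < i) (m : ℕ) (hm : m ≤ s*i) :
    maxEdges (cliqueUnion s i) m = f i m := by
  apply le_antisymm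
  · apply Finset.sup_le
    intro A hA
    rw [Finset.mem_powersetCard] at hA
    rw [edgesIn_decomp]
    calc ∑ j : Fin s, ((A.filter (fun p => p.1 = j)).card).choose 2
        ≤ f i (∑ j : Fin s, (A.filter (fun p => p.1 = j)).card) :=
          sum_choose_le hi _ _ (fun j _ => fiber_card_le A j)
      _ = f i m := by rw [← card_fiberwise, hA.2]
  · have hcard : (Am s i m).card = m := by
      rw [card_fiberwise]
      have : ∀ j : Fin s, ((Am s i m).filter (fun p => p.1 = j)).card
          = min i (m - (j : ℕ)*i) := fun j => Am_fiber m j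
      rw [Finset.sum_congr rfl (fun j _ => this j)]
      rw [Fin.sum_univ_eq_sum_range (fun j => min i (m - j*i)) s]
      exact sum_min_card hi s m hm
    have hedges : edgesIn (cliqueUnion s i) (Am s i m) = f i m := by
      rw [edgesIn_decomp]
      rw [Finset.sum_congr rfl (fun j _ => by rw [Am_fiber m j])]
      rw [Fin.sum_univ_eq_sum_range (fun j => (min i (m - j*i)).choose 2) s]
      exact sum_min_f hi s m hm
    rw [← hedges]
    exact Finset.le_sup (Finset.mem_powersetCard.2 ⟨Finset.subset_univ _, hcard⟩)

end DeltaAux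

/-- the `δ`-sequence of the disjoint union of `s` copies of `K_i` is
the concatenation of `s` copies of `(0, 1, …, i-1)`, i.e. `δ(m) = (m-1) mod i`. -/
theorem deltaSeq_cliqueUnion (s i : ℕ) (hs : 1 ≤ s) (hi : 1 ≤ i) :
    ∀ m : ℕ, 1 ≤ m → m ≤ s * i →
      deltaSeq (cliqueUnion s i) m = (((m - 1) % i : ℕ) : ℤ) := by
  intro m hm1 hm2
  unfold deltaSeq
  rw [DeltaAux.maxEdges_eq hi m hm2, DeltaAux.maxEdges_eq hi (m-1) (by omega)]
  have hstep := DeltaAux.f_succ hi (m-1)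
  have hm : m - 1 + 1 = m := by omega
  rw [hm] at hstep
  omega
end

section
/- Let G₁ and G₂ be graphs, and let H = G₁ ∘ G₂ be their join (the graph on the disjoint union of vertex sets with all edges of G₁ and G₂ plus all edges between V(G₁) and V(G₂)). Then for any m with 0 ≤ m ≤ |V(G₁)| + |V(G₂)|, I_H(m) = max over a + b = m, 0 ≤ a ≤ |V(G₁)|, 0 ≤ b ≤ |V(G₂)|, of (I_{G₁}(a) + I_{G₂}(b) + a·b). -/
open Finset

/-- The join `G₁ ∘ G₂`: both graphs plus all edges between them. -/
def joinGraph {V₁ V₂ : Type*} (G₁ : SimpleGraph V₁) (G₂ : SimpleGraph V₂) :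
    SimpleGraph (V₁ ⊕ V₂) where
  Adj x y :=
    match x, y with
    | .inl a, .inl b => G₁.Adj a b
    | .inr a, .inr b => G₂.Adj a b
    | .inl _, .inr _ => True
    | .inr _, .inl _ => True
  symm := by
    constructor
    intro x y h
    cases x <;> cases y <;> simp_all [SimpleGraph.adj_comm]
  loopless := by
    constructor
    intro x
    cases x <;> simp

instance {V₁ V₂ : Type*} (G₁ : SimpleGraph V₁) (G₂ : SimpleGraph V₂)
    [DecidableRel G₁.Adj] [DecidableRel G₂.Adj] : DecidableRel (joinGraph G₁ G₂).Adj := by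
  intro x y
  cases x <;> cases y <;> (unfold joinGraph; exact inferInstance)

lemma sym2_map_eq_pair {α β : Type*} {f : α → β} (hf : Function.Injective f) {w : Sym2 α}
    {a b : α} (h : Sym2.map f w = s(f a, f b)) : w = s(a, b) :=
  Sym2.map.injective hf (by rw [h, Sym2.map_pair_eq])

lemma sym2_map_inl_ne {α β : Type*} (w : Sym2 α) (a : α) (b : β) :
    Sym2.map Sum.inl w ≠ s(Sum.inl a, Sum.inr b) := by
  induction w using Sym2.ind with
  | _ x y => simp [Sym2.eq_iff]

lemma sym2_map_inr_ne {α β : Type*} (w : Sym2 β) (a : α) (b : β) :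
    Sym2.map Sum.inr w ≠ s(Sum.inl a, Sum.inr b) := by
  induction w using Sym2.ind with
  | _ x y => simp [Sym2.eq_iff]

lemma sym2_map_inr_ne' {α β : Type*} (w : Sym2 β) (a b : α) :
    Sym2.map Sum.inr w ≠ s(Sum.inl a, Sum.inl b) := by
  induction w using Sym2.ind with
  | _ x y => simp [Sym2.eq_iff]

lemma edgesIn_join {V₁ V₂ : Type*} [Fintype V₁] [Fintype V₂] [DecidableEq V₁] [DecidableEq V₂]
    (G₁ : SimpleGraph V₁) (G₂ : SimpleGraph V₂) [DecidableRel G₁.Adj] [DecidableRel G₂.Adj]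
    (A : Finset (V₁ ⊕ V₂)) :
    edgesIn (joinGraph G₁ G₂) A =
      edgesIn G₁ A.toLeft + edgesIn G₂ A.toRight + A.toLeft.card * A.toRight.card := by
  classical
  unfold edgesIn
  have key : (joinGraph G₁ G₂).edgeFinset.filter (fun e => ∀ v ∈ e, v ∈ A)
      = ((G₁.edgeFinset.filter (fun e => ∀ v ∈ e, v ∈ A.toLeft)).image (Sym2.map Sum.inl)
        ∪ (G₂.edgeFinset.filter (fun e => ∀ v ∈ e, v ∈ A.toRight)).image (Sym2.map Sum.inr))
        ∪ (A.toLeft ×ˢ A.toRight).image (fun p => s(Sum.inl p.1, Sum.inr p.2)) := by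
    ext e
    induction e using Sym2.ind with
    | _ x y =>
      obtain a | a := x <;> obtain b | b := y <;>
        simp only [mem_filter, SimpleGraph.mem_edgeFinset, SimpleGraph.mem_edgeSet] <;>
        simp only [mem_filter, SimpleGraph.mem_edgeFinset, SimpleGraph.mem_edgeSet, joinGraph,
          mem_union, mem_image, mem_product, mem_toLeft, mem_toRight, Sym2.mem_iff,
          forall_eq_or_imp, forall_eq]
      · constructor
        · rintro ⟨hadj, h1, h2⟩
          refine Or.inl (Or.inl ⟨s(a, b), ⟨hadj, ?_⟩, by rw [Sym2.map_pair_eq]⟩)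
          rintro v hv
          rcases Sym2.mem_iff.1 hv with rfl | rfl
          exacts [h1, h2]
        · rintro ((⟨w, ⟨hadj, hw⟩, hmap⟩ | ⟨w, ⟨hadj, hw⟩, hmap⟩) | ⟨⟨c, d⟩, _, hmap⟩)
          · obtain rfl := sym2_map_eq_pair Sum.inl_injective hmap
            simp only [Sym2.mem_iff, forall_eq_or_imp, forall_eq] at hw
            exact ⟨hadj, hw⟩
          · induction w using Sym2.ind with
            | _ c d => rw [Sym2.map_pair_eq] at hmap; simp [Sym2.eq_iff] at hmap
          · simp [Sym2.eq_iff] at hmap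
      · constructor
        · rintro ⟨-, h1, h2⟩
          exact Or.inr ⟨(a, b), ⟨h1, h2⟩, rfl⟩
        · rintro ((⟨w, _, hmap⟩ | ⟨w, _, hmap⟩) | ⟨⟨c, d⟩, ⟨hc, hd⟩, hmap⟩)
          · exact absurd hmap (sym2_map_inl_ne w a b)
          · exact absurd hmap (sym2_map_inr_ne w a b)
          · simp only [Sym2.eq_iff] at hmap
            rcases hmap with ⟨h1, h2⟩ | ⟨h1, h2⟩
            · cases h1; cases h2; exact ⟨trivial, hc, hd⟩
            · cases h1
      · constructor
        · rintro ⟨-, h1, h2⟩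
          exact Or.inr ⟨(b, a), ⟨h2, h1⟩, by rw [Sym2.eq_swap]⟩
        · rintro ((⟨w, _, hmap⟩ | ⟨w, _, hmap⟩) | ⟨⟨c, d⟩, ⟨hc, hd⟩, hmap⟩)
          · rw [Sym2.eq_swap] at hmap
            exact absurd hmap (sym2_map_inl_ne w b a)
          · rw [Sym2.eq_swap] at hmap
            exact absurd hmap (sym2_map_inr_ne w b a)
          · simp only [Sym2.eq_iff] at hmap
            rcases hmap with ⟨h1, h2⟩ | ⟨h1, h2⟩
            · cases h1
            · cases h1; cases h2; exact ⟨trivial, hd, hc⟩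
      · constructor
        · rintro ⟨hadj, h1, h2⟩
          refine Or.inl (Or.inr ⟨s(a, b), ⟨hadj, ?_⟩, by rw [Sym2.map_pair_eq]⟩)
          rintro v hv
          rcases Sym2.mem_iff.1 hv with rfl | rfl
          exacts [h1, h2]
        · rintro ((⟨w, ⟨hadj, hw⟩, hmap⟩ | ⟨w, ⟨hadj, hw⟩, hmap⟩) | ⟨⟨c, d⟩, _, hmap⟩)
          · induction w using Sym2.ind with
            | _ c d => rw [Sym2.map_pair_eq] at hmap; simp [Sym2.eq_iff] at hmap
          · obtain rfl := sym2_map_eq_pair Sum.inr_injective hmap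
            simp only [Sym2.mem_iff, forall_eq_or_imp, forall_eq] at hw
            exact ⟨hadj, hw⟩
          · simp [Sym2.eq_iff] at hmap
  rw [key]
  rw [card_union_of_disjoint, card_union_of_disjoint,
    card_image_of_injective _ (Sym2.map.injective Sum.inl_injective),
    card_image_of_injective _ (Sym2.map.injective Sum.inr_injective),
    card_image_of_injective, card_product]
  · rintro ⟨a, b⟩ ⟨c, d⟩ h
    simp only [Sym2.eq_iff] at h
    rcases h with ⟨h1, h2⟩ | ⟨h1, h2⟩
    · cases h1; cases h2; rfl
    · cases h1
  · rw [disjoint_left]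
    intro e he he'
    obtain ⟨w, -, rfl⟩ := mem_image.1 he
    obtain ⟨w', -, h⟩ := mem_image.1 he'
    induction w using Sym2.ind with
    | _ c d =>
      rw [Sym2.map_pair_eq] at h
      exact sym2_map_inr_ne' w' c d h
  · rw [disjoint_left]
    intro e he he'
    obtain ⟨⟨a', b'⟩, -, h⟩ := mem_image.1 he'
    rcases mem_union.1 he with h1 | h1 <;> obtain ⟨w, -, rfl⟩ := mem_image.1 h1
    · exact sym2_map_inl_ne w a' b' h.symm
    · exact sym2_map_inr_ne w a' b' h.symm

lemma exists_maxEdges {V : Type*} (G : SimpleGraph V) [Fintype V] [DecidableEq V]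
    [DecidableRel G.Adj] {a : ℕ} (ha : a ≤ Fintype.card V) :
    ∃ B : Finset V, B.card = a ∧ edgesIn G B = maxEdges G a := by
  obtain ⟨B, hB, h⟩ := Finset.exists_mem_eq_sup ((Finset.univ : Finset V).powersetCard a)
    (Finset.powersetCard_nonempty.2 (by simpa using ha)) (fun A => edgesIn G A)
  exact ⟨B, (Finset.mem_powersetCard.1 hB).2, h.symm⟩

/-- `I_{G₁∘G₂}(m) = max over a + b = m of I_{G₁}(a) + I_{G₂}(b) + a·b`. -/
theorem maxEdges_join {V₁ V₂ : Type*} [Fintype V₁] [Fintype V₂] [DecidableEq V₁] [DecidableEq V₂]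
    (G₁ : SimpleGraph V₁) (G₂ : SimpleGraph V₂) [DecidableRel G₁.Adj] [DecidableRel G₂.Adj]
    (m : ℕ) (hm : m ≤ Fintype.card V₁ + Fintype.card V₂) :
    maxEdges (joinGraph G₁ G₂) m =
      ((Finset.range (m + 1)).filter
          (fun a => a ≤ Fintype.card V₁ ∧ m - a ≤ Fintype.card V₂)).sup
        (fun a => maxEdges G₁ a + maxEdges G₂ (m - a) + a * (m - a)) := by
  classical
  apply le_antisymm
  · refine Finset.sup_le ?_
    intro A hA
    have hAcard : A.card = m := (Finset.mem_powersetCard.1 hA).2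
    have hab : A.toLeft.card + A.toRight.card = m := by
      rw [Finset.card_toLeft_add_card_toRight, hAcard]
    have hsub : m - A.toLeft.card = A.toRight.card := by omega
    have hamem : A.toLeft.card ∈ (Finset.range (m + 1)).filter
        (fun a => a ≤ Fintype.card V₁ ∧ m - a ≤ Fintype.card V₂) := by
      rw [Finset.mem_filter, Finset.mem_range, hsub]
      exact ⟨by omega, Finset.card_le_univ _, Finset.card_le_univ _⟩
    rw [edgesIn_join]
    refine le_trans ?_ (Finset.le_sup hamem)
    rw [hsub]
    gcongr
    · exact Finset.le_sup (Finset.mem_powersetCard.2 ⟨Finset.subset_univ _, rfl⟩)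
    · exact Finset.le_sup (Finset.mem_powersetCard.2 ⟨Finset.subset_univ _, rfl⟩)
  · refine Finset.sup_le ?_
    intro a ha
    rw [Finset.mem_filter, Finset.mem_range] at ha
    obtain ⟨ham, ha1, ha2⟩ := ha
    obtain ⟨B₁, hB₁c, hB₁⟩ := exists_maxEdges G₁ ha1
    obtain ⟨B₂, hB₂c, hB₂⟩ := exists_maxEdges G₂ ha2
    have hmem : B₁.disjSum B₂ ∈ (Finset.univ : Finset (V₁ ⊕ V₂)).powersetCard m :=
      Finset.mem_powersetCard.2 ⟨Finset.subset_univ _, by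
        rw [Finset.card_disjSum, hB₁c, hB₂c]; omega⟩
    refine le_trans ?_ (Finset.le_sup hmem)
    rw [edgesIn_join, Finset.toLeft_disjSum, Finset.toRight_disjSum, hB₁, hB₂, hB₁c, hB₂c]
end

section
/- Let G be a graph with a fixed optimal order labeling V = {0, 1, ..., n-1}. For A ⊆ V², say A is compressed if for each i ∈ {1,2} and a ∈ V, the section A_i(a) = { x : the pair with i-th coordinate a and other coordinate x is in A } equals the initial segment {0, 1, ..., |A_i(a)| - 1}. Then if A ⊆ V² is compressed, the number of edges of G × G induced by A equals Σ_{(x,y) ∈ A} (δ_G(x) + δ_G(y)), where δ_G(x) denotes the number of neighbors of the vertex at position x among the vertices at positions 0, ..., x-1. -/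
open Finset

/-- `A ⊆ V²` is compressed: every section in each coordinate is an initial segment. -/
def Compressed {n : ℕ} (A : Finset (Fin n × Fin n)) : Prop :=
  ∀ a : Fin n,
    ((A.filter (fun p => p.1 = a)).image Prod.snd =
      Finset.univ.filter (fun x : Fin n => (x : ℕ) < (A.filter (fun p => p.1 = a)).card)) ∧
    ((A.filter (fun p => p.2 = a)).image Prod.fst =
      Finset.univ.filter (fun x : Fin n => (x : ℕ) < (A.filter (fun p => p.2 = a)).card))

/-- Number of neighbors of `x` among the vertices `0, …, x-1`. -/
def dLow {n : ℕ} (G : SimpleGraph (Fin n)) [DecidableRel G.Adj] (x : Fin n) : ℕ :=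
  ((G.neighborFinset x).filter (fun y => y < x)).card

lemma edgesIn_eq_sum {V : Type*} [Fintype V] [DecidableEq V] (H : SimpleGraph V)
    [DecidableRel H.Adj] (A : Finset V) (f : V → ℕ) (hf : Function.Injective f) :
    edgesIn H A = ∑ p ∈ A, (A.filter (fun q => H.Adj p q ∧ f q < f p)).card := by
  classical
  set T : Finset (V × V) :=
    (A ×ˢ A).filter (fun z => H.Adj z.1 z.2 ∧ f z.2 < f z.1) with hT
  have hTcard : T.card = ∑ p ∈ A, (A.filter (fun q => H.Adj p q ∧ f q < f p)).card := by
    rw [Finset.card_eq_sum_card_fiberwise (f := Prod.fst) (t := A)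
      (fun z hz => (Finset.mem_product.mp (Finset.mem_filter.mp hz).1).1)]
    refine Finset.sum_congr rfl fun p hp => ?_
    have : T.filter (fun z => z.1 = p)
        = (A.filter (fun q => H.Adj p q ∧ f q < f p)).image (fun q => (p, q)) := by
      ext z
      simp only [hT, Finset.mem_filter, Finset.mem_product, Finset.mem_image]
      constructor
      · rintro ⟨⟨⟨h1, h2⟩, h3, h4⟩, h5⟩
        exact ⟨z.2, ⟨h2, by rw [← h5]; exact h3, by rw [← h5]; exact h4⟩, by
          rw [← h5]⟩
      · rintro ⟨q, ⟨hq, h3, h4⟩, rfl⟩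
        exact ⟨⟨⟨hp, hq⟩, h3, h4⟩, rfl⟩
    rw [this, Finset.card_image_of_injective _ (fun a b h => (Prod.mk.injEq _ _ _ _ ▸ h).2)]
  rw [← hTcard]
  unfold edgesIn
  refine (Finset.card_bij (fun z _ => Sym2.mk z.1 z.2) ?_ ?_ ?_).symm
  · rintro ⟨a, b⟩ hz
    simp only [hT, Finset.mem_filter, Finset.mem_product] at hz
    obtain ⟨⟨ha, hb⟩, hadj, _⟩ := hz
    simp only [Finset.mem_filter, SimpleGraph.mem_edgeFinset, Sym2.mem_iff]
    exact ⟨hadj, by rintro v (rfl | rfl) <;> assumption⟩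
  · rintro ⟨a, b⟩ hz ⟨c, d⟩ hz' h
    simp only [hT, Finset.mem_filter, Finset.mem_product] at hz hz'
    rw [Sym2.mk_eq_mk_iff] at h
    rcases h with h | h
    · exact h
    · simp only [Prod.swap_prod_mk, Prod.mk.injEq] at h
      obtain ⟨rfl, rfl⟩ := h
      exact absurd hz'.2.2 (not_lt.mpr hz.2.2.le)
  · intro e he
    simp only [Finset.mem_filter, SimpleGraph.mem_edgeFinset] at he
    induction e with
    | _ a b =>
      have hadj : H.Adj a b := he.1
      have ha : a ∈ A := he.2 a (by simp)
      have hb : b ∈ A := he.2 b (by simp)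
      have hne : f a ≠ f b := fun h => hadj.ne (hf h)
      rcases hne.lt_or_gt with h | h
      · exact ⟨(b, a), by simp [hT, ha, hb, hadj.symm, h], Sym2.eq_swap⟩
      · exact ⟨(a, b), by simp [hT, ha, hb, hadj, h], rfl⟩

/-- if the labeling `0, …, n-1` is an optimal order for `G` and `A ⊆ V²` is
compressed, then the number of edges of `G × G` induced by `A` is
`Σ_{(x,y)∈A} (δ_G(x) + δ_G(y))`. -/
theorem compressed_edge_count {n : ℕ} (G : SimpleGraph (Fin n)) [DecidableRel G.Adj]
    [DecidableRel (G □ G).Adj]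
    (hopt : ∀ m : ℕ, m ≤ n →
      edgesIn G (Finset.univ.filter (fun x : Fin n => (x : ℕ) < m)) = maxEdges G m)
    (A : Finset (Fin n × Fin n)) (hA : Compressed A) :
    edgesIn (G □ G) A = ∑ p ∈ A, (dLow G p.1 + dLow G p.2) := by
  classical
  have hf : Function.Injective (fun p : Fin n × Fin n => (p.1 : ℕ) * n + (p.2 : ℕ)) := by
    rintro ⟨a, b⟩ ⟨c, d⟩ h
    simp only at h
    have hb := b.2; have hd := d.2
    have hac : (a : ℕ) = c := by
      rcases Nat.lt_trichotomy (a : ℕ) (c : ℕ) with hlt | heq | hgt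
      · nlinarith
      · exact heq
      · nlinarith
    rw [hac] at h
    have : (b : ℕ) = d := by omega
    exact Prod.ext (Fin.ext hac) (Fin.ext this)
  rw [edgesIn_eq_sum (G □ G) A (fun p => (p.1 : ℕ) * n + (p.2 : ℕ)) hf]
  refine Finset.sum_congr rfl ?_
  rintro ⟨x, y⟩ hp
  set S1 : Finset (Fin n × Fin n) :=
    ((G.neighborFinset x).filter (fun x' => x' < x)).image (fun x' => (x', y)) with hS1
  set S2 : Finset (Fin n × Fin n) :=
    ((G.neighborFinset y).filter (fun y' => y' < y)).image (fun y' => (x, y')) with hS2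
  have key : A.filter (fun q => (G □ G).Adj (x, y) q ∧
      (q.1 : ℕ) * n + (q.2 : ℕ) < (x : ℕ) * n + (y : ℕ)) = S1 ∪ S2 := by
    ext ⟨u, v⟩
    simp only [Finset.mem_filter, Finset.mem_union, hS1, hS2, Finset.mem_image,
      Finset.mem_filter, SimpleGraph.mem_neighborFinset, SimpleGraph.boxProd_adj]
    constructor
    · rintro ⟨hmem, (⟨hadj, h2⟩ | ⟨hadj, h1⟩), hlt⟩
      · -- G.Adj x u, y = v
        subst h2
        left
        refine ⟨u, ⟨hadj, Fin.lt_def.mpr ?_⟩, rfl⟩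
        have h' : (u : ℕ) * n < (x : ℕ) * n := by omega
        exact Nat.lt_of_mul_lt_mul_right h'
      · -- G.Adj y v, x = u
        subst h1
        right
        exact ⟨v, ⟨hadj, Fin.lt_def.mpr (by omega)⟩, rfl⟩
    · rintro (⟨x', ⟨hadj, hlt⟩, h⟩ | ⟨y', ⟨hadj, hlt⟩, h⟩)
      · injection h with e1 e2
        subst e1; subst e2
        have hltn : (x' : ℕ) < (x : ℕ) := Fin.lt_def.mp hlt
        have hmem : (x', y) ∈ A := by
          have h2 := (hA y).2
          have hx : x ∈ (A.filter (fun p => p.2 = y)).image Prod.fst :=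
            Finset.mem_image.mpr ⟨(x, y), Finset.mem_filter.mpr ⟨hp, rfl⟩, rfl⟩
          rw [h2] at hx
          have hxlt : (x : ℕ) < (A.filter (fun p => p.2 = y)).card :=
            (Finset.mem_filter.mp hx).2
          have hu : x' ∈ (A.filter (fun p => p.2 = y)).image Prod.fst := by
            rw [h2]
            exact Finset.mem_filter.mpr ⟨Finset.mem_univ _, lt_trans hltn hxlt⟩
          obtain ⟨⟨a, b⟩, hab, hfst⟩ := Finset.mem_image.mp hu
          obtain ⟨habA, hsnd⟩ := Finset.mem_filter.mp hab
          simp only at hfst hsnd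
          rwa [hfst, hsnd] at habA
        refine ⟨hmem, Or.inl ⟨hadj, rfl⟩, ?_⟩
        have e1 : ((x' : ℕ) + 1) * n ≤ (x : ℕ) * n := Nat.mul_le_mul_right n (by omega)
        have e2 : ((x' : ℕ) + 1) * n = (x' : ℕ) * n + n := by ring
        have := y.2
        omega
      · injection h with e1 e2
        subst e1; subst e2
        have hltn : (y' : ℕ) < (y : ℕ) := Fin.lt_def.mp hlt
        have hmem : (x, y') ∈ A := by
          have h1 := (hA x).1
          have hy : y ∈ (A.filter (fun p => p.1 = x)).image Prod.snd :=
            Finset.mem_image.mpr ⟨(x, y), Finset.mem_filter.mpr ⟨hp, rfl⟩, rfl⟩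
          rw [h1] at hy
          have hylt : (y : ℕ) < (A.filter (fun p => p.1 = x)).card :=
            (Finset.mem_filter.mp hy).2
          have hv : y' ∈ (A.filter (fun p => p.1 = x)).image Prod.snd := by
            rw [h1]
            exact Finset.mem_filter.mpr ⟨Finset.mem_univ _, lt_trans hltn hylt⟩
          obtain ⟨⟨a, b⟩, hab, hsnd⟩ := Finset.mem_image.mp hv
          obtain ⟨habA, hfst⟩ := Finset.mem_filter.mp hab
          simp only at hsnd hfst
          rwa [hfst, hsnd] at habA
        exact ⟨hmem, Or.inr ⟨hadj, rfl⟩, by omega⟩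
  rw [key, Finset.card_union_of_disjoint, hS1, hS2]
  · rw [Finset.card_image_of_injective _ (fun a b h => ((Prod.ext_iff.mp h).1 : _)),
      Finset.card_image_of_injective _ (fun a b h => ((Prod.ext_iff.mp h).2 : _))]
    rfl
  · rw [Finset.disjoint_left]
    rintro ⟨u, v⟩ h1 h2
    simp only [hS1, hS2, Finset.mem_image, Finset.mem_filter,
      SimpleGraph.mem_neighborFinset] at h1 h2
    obtain ⟨x', ⟨_, hx'⟩, hh1⟩ := h1
    obtain ⟨y', ⟨_, hy'⟩, hh2⟩ := h2
    injection hh1 with e1 e2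
    subst e1; subst e2
    injection hh2 with e3 e4
    subst e4
    rw [e3] at hx'
    exact absurd hx' (lt_irrefl x')
end

section
/- Let G be a graph admitting an optimal order, and label V(G) = {0,...,n-1} by that order. If A ⊆ V(G)², let B be the compression of A: replace each column section A_1(a) by the initial segment of the same size, and each row section A_2(a) by the initial segment of the same size, iterating until stable. Then the compressed set B satisfies |B| = |A| and the number of induced edges of G × G in B is at least that in A; in particular, for every m there exists a compressed optimal set of size m in G × G. -/
open Finset

namespace CompAux

variable {V : Type*} [Fintype V] [DecidableEq V]

/-- ordered adjacent pairs inside `A`. -/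
def op (H : SimpleGraph V) [DecidableRel H.Adj] (A : Finset V) : ℕ :=
  (univ.filter fun p : V × V => H.Adj p.1 p.2 ∧ p.1 ∈ A ∧ p.2 ∈ A).card

lemma two_mul_edgesIn (H : SimpleGraph V) [DecidableRel H.Adj] (A : Finset V) :
    2 * edgesIn H A = op H A := by
  classical
  let HA : SimpleGraph V :=
    { Adj := fun u v => H.Adj u v ∧ u ∈ A ∧ v ∈ A
      symm := ⟨fun u v h => ⟨h.1.symm, h.2.2, h.2.1⟩⟩
      loopless := ⟨fun u h => H.loopless.irrefl u h.1⟩ }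
  have hd : DecidableRel HA.Adj := fun u v => instDecidableAnd
  have h1 : edgesIn H A = HA.edgeFinset.card := by
    rw [edgesIn]
    congr 1
    ext e
    induction e using Sym2.ind with
    | _ x y =>
      simp only [mem_filter, SimpleGraph.mem_edgeFinset, SimpleGraph.mem_edgeSet,
        Sym2.mem_iff, forall_eq_or_imp, forall_eq, HA]
  rw [h1, HA.two_mul_card_edgeFinset, op]
  apply congrArg
  ext ⟨x, y⟩
  simp [HA]

lemma op_le_op (H : SimpleGraph V) [DecidableRel H.Adj] {A B : Finset V}
    (h : edgesIn H A ≤ edgesIn H B) : op H A ≤ op H B := by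
  rw [← two_mul_edgesIn, ← two_mul_edgesIn]; omega

lemma edgesIn_le_edgesIn (H : SimpleGraph V) [DecidableRel H.Adj] {A B : Finset V}
    (h : op H A ≤ op H B) : edgesIn H A ≤ edgesIn H B := by
  have := two_mul_edgesIn H A; have := two_mul_edgesIn H B; omega

variable {n : ℕ}

/-- initial segment of length `s` in `Fin n`. -/
def I (n s : ℕ) : Finset (Fin n) := univ.filter fun x => (x : ℕ) < s

/-- the section (column) of `A` above `a`. -/
def Sec (A : Finset (Fin n × Fin n)) (a : Fin n) : Finset (Fin n) :=
  (A.filter fun p => p.1 = a).image Prod.snd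

lemma mem_Sec {A : Finset (Fin n × Fin n)} {a b : Fin n} : b ∈ Sec A a ↔ (a, b) ∈ A := by
  simp only [Sec, mem_image, mem_filter]
  constructor
  · rintro ⟨⟨x, y⟩, ⟨hA, rfl⟩, rfl⟩; exact hA
  · intro h; exact ⟨(a, b), ⟨h, rfl⟩, rfl⟩

lemma mem_I {s : ℕ} {b : Fin n} : b ∈ I n s ↔ (b : ℕ) < s := by simp [I]

lemma Sec_card (A : Finset (Fin n × Fin n)) (a : Fin n) :
    (Sec A a).card = (A.filter fun p => p.1 = a).card := by
  apply Finset.card_image_of_injOn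
  intro p hp q hq h
  have hp1 := (mem_filter.mp hp).2
  have hq1 := (mem_filter.mp hq).2
  exact Prod.ext (hp1.trans hq1.symm) h

lemma card_I {s : ℕ} (h : s ≤ n) : (I n s).card = s := by
  have : I n s = (Finset.range s).attachFin
      (fun m hm => lt_of_lt_of_le (mem_range.mp hm) h) := by
    ext x; simp [I, Finset.mem_attachFin]
  rw [this, Finset.card_attachFin, Finset.card_range]

lemma Sec_card_le (A : Finset (Fin n × Fin n)) (a : Fin n) : (Sec A a).card ≤ n := by
  simpa using Finset.card_le_univ (Sec A a)

/-- column compression. -/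
def colComp (A : Finset (Fin n × Fin n)) : Finset (Fin n × Fin n) :=
  univ.filter fun p => (p.2 : ℕ) < (Sec A p.1).card

lemma mem_colComp {A : Finset (Fin n × Fin n)} {p : Fin n × Fin n} :
    p ∈ colComp A ↔ (p.2 : ℕ) < (Sec A p.1).card := by simp [colComp]

lemma Sec_colComp (A : Finset (Fin n × Fin n)) (a : Fin n) :
    Sec (colComp A) a = I n ((Sec A a).card) := by
  ext b; rw [mem_Sec, mem_I, mem_colComp]

lemma card_fiberwise (A : Finset (Fin n × Fin n)) : A.card = ∑ a, (Sec A a).card := by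
  rw [Finset.card_eq_sum_card_fiberwise (f := Prod.fst) (t := univ) (fun p _ => mem_univ p.1)]
  exact Finset.sum_congr rfl fun a _ => (Sec_card A a).symm

lemma card_colComp (A : Finset (Fin n × Fin n)) : (colComp A).card = A.card := by
  rw [card_fiberwise (colComp A), card_fiberwise A]
  exact Finset.sum_congr rfl fun a _ => by
    rw [Sec_colComp, card_I (Sec_card_le A a)]

lemma colComp_eq_iff {A : Finset (Fin n × Fin n)} :
    colComp A = A ↔ ∀ a, Sec A a = I n ((Sec A a).card) := by
  constructor
  · intro h a; have := Sec_colComp A a; rwa [h] at this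
  · intro h
    ext ⟨a, b⟩
    rw [mem_colComp, ← mem_I (s := (Sec A a).card), ← h a, mem_Sec]

/-- initial segments minimize the sum of values, strictly unless equal. -/
lemma sum_I_lt {S : Finset (Fin n)} (h : S ≠ I n S.card) :
    ∑ b ∈ I n S.card, (b : ℕ) < ∑ b ∈ S, (b : ℕ) := by
  set s := S.card with hs
  have hsn : s ≤ n := by simpa using Finset.card_le_univ S
  have hIcard : (I n s).card = s := card_I hsn
  have hD : (S \ I n s).Nonempty := by
    rw [Finset.sdiff_nonempty]
    intro hsub
    exact h (Finset.eq_of_subset_of_card_le hsub (by rw [hIcard]))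
  have hcards : (I n s \ S).card = (S \ I n s).card := by
    have h1 := Finset.card_sdiff_add_card_inter (I n s) S
    have h2 := Finset.card_sdiff_add_card_inter S (I n s)
    rw [Finset.inter_comm] at h2
    omega
  have hspos : 1 ≤ s := by
    rcases hD with ⟨x, hx⟩
    have hxS := (Finset.mem_sdiff.mp hx).1
    have : 0 < S.card := Finset.card_pos.mpr ⟨x, hxS⟩
    omega
  have key : ∑ b ∈ I n s \ S, (b : ℕ) < ∑ b ∈ S \ I n s, (b : ℕ) := by
    calc ∑ b ∈ I n s \ S, (b : ℕ) ≤ (I n s \ S).card * (s - 1) := by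
            apply Finset.sum_le_card_nsmul
            intro x hx
            have := mem_I.mp (Finset.mem_sdiff.mp hx).1
            omega
      _ < (S \ I n s).card * s := by
            rw [hcards]
            have hpos : 0 < (S \ I n s).card := Finset.card_pos.mpr hD
            calc (S \ I n s).card * (s - 1) < (S \ I n s).card * (s - 1) + (S \ I n s).card := by omega
              _ = (S \ I n s).card * s := by rw [← Nat.mul_succ, Nat.succ_eq_add_one, Nat.sub_add_cancel hspos]
      _ ≤ ∑ b ∈ S \ I n s, (b : ℕ) := by
            apply Finset.card_nsmul_le_sum
            intro x hx
            have hx1 := (Finset.mem_sdiff.mp hx).2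
            rw [mem_I] at hx1
            omega
  have e1 : ∑ b ∈ S, (b : ℕ) = ∑ b ∈ S ∩ I n s, (b : ℕ) + ∑ b ∈ S \ I n s, (b : ℕ) :=
    (Finset.sum_inter_add_sum_sdiff S (I n s) _).symm
  have e2 : ∑ b ∈ I n s, (b : ℕ) = ∑ b ∈ I n s ∩ S, (b : ℕ) + ∑ b ∈ I n s \ S, (b : ℕ) :=
    (Finset.sum_inter_add_sum_sdiff (I n s) S _).symm
  rw [e1, e2, Finset.inter_comm]
  omega

lemma sum_I_le (S : Finset (Fin n)) :
    ∑ b ∈ I n S.card, (b : ℕ) ≤ ∑ b ∈ S, (b : ℕ) := by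
  by_cases h : S = I n S.card
  · rw [← h]
  · exact le_of_lt (sum_I_lt h)

/-- the potential function. -/
def pot (A : Finset (Fin n × Fin n)) : ℕ := ∑ p ∈ A, ((p.1 : ℕ) + (p.2 : ℕ))

lemma pot_eq (A : Finset (Fin n × Fin n)) :
    pot A = ∑ a, ((Sec A a).card * (a : ℕ) + ∑ b ∈ Sec A a, (b : ℕ)) := by
  rw [pot, ← Finset.sum_fiberwise_of_maps_to (g := Prod.fst) (t := univ) (fun p _ => mem_univ p.1)]
  apply Finset.sum_congr rfl
  intro a _
  have himg : ∑ p ∈ A.filter (fun p => p.1 = a), ((p.1 : ℕ) + (p.2 : ℕ))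
      = ∑ p ∈ A.filter (fun p => p.1 = a), ((a : ℕ) + (p.2 : ℕ)) := by
    apply Finset.sum_congr rfl
    intro p hp
    rw [(mem_filter.mp hp).2]
  rw [himg, Finset.sum_add_distrib, Finset.sum_const, ← Sec_card, smul_eq_mul]
  congr 1
  rw [Sec]
  rw [Finset.sum_image]
  intro p hp q hq hpq
  have hp1 := (mem_filter.mp hp).2
  have hq1 := (mem_filter.mp hq).2
  exact Prod.ext (hp1.trans hq1.symm) hpq

lemma pot_colComp_lt {A : Finset (Fin n × Fin n)} (h : colComp A ≠ A) :
    pot (colComp A) < pot A := by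
  obtain ⟨a0, ha0⟩ : ∃ a, Sec A a ≠ I n ((Sec A a).card) := by
    by_contra hc
    push_neg at hc
    exact h (colComp_eq_iff.mpr hc)
  rw [pot_eq, pot_eq]
  apply Finset.sum_lt_sum
  · intro a _
    rw [Sec_colComp, card_I (Sec_card_le A a)]
    exact Nat.add_le_add_left (sum_I_le (Sec A a)) _
  · refine ⟨a0, mem_univ a0, ?_⟩
    rw [Sec_colComp, card_I (Sec_card_le A a0)]
    exact Nat.add_lt_add_left (sum_I_lt ha0) _

section Decomp

variable (G : SimpleGraph (Fin n)) [DecidableRel G.Adj] [DecidableRel (G □ G).Adj]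

lemma vert_card (A : Finset (Fin n × Fin n)) :
    #(univ.filter fun x : (Fin n × Fin n) × (Fin n × Fin n) =>
        x.1.1 = x.2.1 ∧ G.Adj x.1.2 x.2.2 ∧ x.1 ∈ A ∧ x.2 ∈ A)
    = ∑ a, op G (Sec A a) := by
  classical
  rw [Finset.card_eq_sum_card_fiberwise (f := fun x => x.1.1) (t := univ) (fun _ _ => mem_univ _)]
  refine Finset.sum_congr rfl fun a _ => ?_
  rw [op]
  apply Finset.card_bij (fun x _ => (x.1.2, x.2.2))
  · rintro ⟨⟨a1, b⟩, ⟨c1, d⟩⟩ hx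
    simp only [mem_filter, mem_univ, true_and] at hx ⊢
    obtain ⟨⟨h1, h2, h3, h4⟩, h5⟩ := hx
    subst h5; subst h1
    exact ⟨h2, mem_Sec.mpr h3, mem_Sec.mpr h4⟩
  · rintro ⟨⟨a1, b⟩, ⟨c1, d⟩⟩ hx ⟨⟨a2, b'⟩, ⟨c2, d'⟩⟩ hy h
    simp only [mem_filter, mem_univ, true_and] at hx hy
    obtain ⟨⟨h1, -, -, -⟩, h5⟩ := hx
    obtain ⟨⟨g1, -, -, -⟩, g5⟩ := hy
    simp only [Prod.mk.injEq] at h ⊢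
    exact ⟨⟨h5.trans g5.symm, h.1⟩, (h1.symm.trans h5).trans (g5.symm.trans g1), h.2⟩
  · rintro ⟨b, d⟩ hp
    simp only [mem_filter, mem_univ, true_and] at hp
    obtain ⟨h1, h2, h3⟩ := hp
    refine ⟨((a, b), (a, d)), ?_, rfl⟩
    simp [mem_Sec.mp h2, mem_Sec.mp h3, h1]

lemma horiz_card (A : Finset (Fin n × Fin n)) :
    #(univ.filter fun x : (Fin n × Fin n) × (Fin n × Fin n) =>
        G.Adj x.1.1 x.2.1 ∧ x.1.2 = x.2.2 ∧ x.1 ∈ A ∧ x.2 ∈ A)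
    = ∑ p ∈ univ.filter (fun p : Fin n × Fin n => G.Adj p.1 p.2),
        (Sec A p.1 ∩ Sec A p.2).card := by
  classical
  rw [Finset.card_eq_sum_card_fiberwise (f := fun x => (x.1.1, x.2.1))
      (t := univ.filter (fun p : Fin n × Fin n => G.Adj p.1 p.2))
      (fun x hx => by
        simp only [Finset.mem_coe, mem_filter, mem_univ, true_and] at hx ⊢
        exact hx.1)]
  refine Finset.sum_congr rfl fun p hp => ?_
  obtain ⟨a, c⟩ := p
  have hadj : G.Adj a c := by
    have := (mem_filter.mp hp).2
    exact this
  apply Finset.card_bij (fun x _ => x.1.2)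
  · rintro ⟨⟨a1, b⟩, ⟨c1, d⟩⟩ hx
    simp only [mem_filter, mem_univ, true_and, Prod.mk.injEq] at hx
    obtain ⟨⟨h1, h2, h3, h4⟩, h5, h6⟩ := hx
    subst h2; subst h5; subst h6
    exact mem_inter.mpr ⟨mem_Sec.mpr h3, mem_Sec.mpr h4⟩

  · rintro ⟨⟨a1, b⟩, ⟨c1, d⟩⟩ hx ⟨⟨a2, b'⟩, ⟨c2, d'⟩⟩ hy h
    simp only [mem_filter, mem_univ, true_and, Prod.mk.injEq] at hx hy
    obtain ⟨⟨-, h2, -, -⟩, h5, h6⟩ := hx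
    obtain ⟨⟨-, g2, -, -⟩, g5, g6⟩ := hy
    simp only at h
    subst h; subst h2; subst g2; subst h5; subst h6; subst g5; subst g6
    rfl
  · intro b hb
    obtain ⟨hb1, hb2⟩ := mem_inter.mp hb
    refine ⟨((a, b), (c, b)), ?_, rfl⟩
    simp [hadj, mem_Sec.mp hb1, mem_Sec.mp hb2]

lemma op_decomp (A : Finset (Fin n × Fin n)) :
    op (G □ G) A = (∑ a, op G (Sec A a))
      + ∑ p ∈ univ.filter (fun p : Fin n × Fin n => G.Adj p.1 p.2),
          (Sec A p.1 ∩ Sec A p.2).card := by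
  classical
  rw [← vert_card G A, ← horiz_card G A, op]
  have hfe : (univ.filter fun p : (Fin n × Fin n) × (Fin n × Fin n) =>
      (G □ G).Adj p.1 p.2 ∧ p.1 ∈ A ∧ p.2 ∈ A)
      = (univ.filter fun x : (Fin n × Fin n) × (Fin n × Fin n) =>
          x.1.1 = x.2.1 ∧ G.Adj x.1.2 x.2.2 ∧ x.1 ∈ A ∧ x.2 ∈ A)
        ∪ (univ.filter fun x : (Fin n × Fin n) × (Fin n × Fin n) =>
          G.Adj x.1.1 x.2.1 ∧ x.1.2 = x.2.2 ∧ x.1 ∈ A ∧ x.2 ∈ A) := by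
    rw [← Finset.filter_or]
    apply Finset.filter_congr
    intro x _
    rw [SimpleGraph.boxProd_adj]
    tauto
  have hdisj : Disjoint
      (univ.filter fun x : (Fin n × Fin n) × (Fin n × Fin n) =>
          x.1.1 = x.2.1 ∧ G.Adj x.1.2 x.2.2 ∧ x.1 ∈ A ∧ x.2 ∈ A)
      (univ.filter fun x : (Fin n × Fin n) × (Fin n × Fin n) =>
          G.Adj x.1.1 x.2.1 ∧ x.1.2 = x.2.2 ∧ x.1 ∈ A ∧ x.2 ∈ A) := by
    rw [Finset.disjoint_filter]
    rintro x - ⟨h1, h2, -⟩ ⟨g1, -, -⟩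
    rw [h1] at g1
    exact G.irrefl g1
  rw [hfe, Finset.card_union_of_disjoint hdisj]

end Decomp

section Main

variable (G : SimpleGraph (Fin n)) [DecidableRel G.Adj] [DecidableRel (G □ G).Adj]

lemma op_colComp_le
    (hopt : ∀ m : ℕ, m ≤ n →
      edgesIn G (Finset.univ.filter (fun x : Fin n => (x : ℕ) < m)) = maxEdges G m)
    (A : Finset (Fin n × Fin n)) :
    op (G □ G) A ≤ op (G □ G) (colComp A) := by
  rw [op_decomp, op_decomp]
  apply Nat.add_le_add
  · apply Finset.sum_le_sum
    intro a _
    rw [Sec_colComp]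
    apply op_le_op
    have hedge : edgesIn G (Sec A a) ≤ maxEdges G ((Sec A a).card) :=
      Finset.le_sup (f := fun S => edgesIn G S)
        (Finset.mem_powersetCard.mpr ⟨subset_univ _, rfl⟩)
    rw [← hopt _ (Sec_card_le A a)] at hedge
    exact hedge
  · apply Finset.sum_le_sum
    intro p _
    rw [Sec_colComp, Sec_colComp]
    have h2 : I n (Sec A p.1).card ∩ I n (Sec A p.2).card
        = I n (min (Sec A p.1).card (Sec A p.2).card) := by
      ext x; simp [I, lt_min_iff]
    rw [h2, card_I (le_trans (min_le_left _ _) (Sec_card_le A p.1))]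
    exact le_min (Finset.card_le_card inter_subset_left)
      (Finset.card_le_card inter_subset_right)

/-- the swap of a set. -/
def sw (A : Finset (Fin n × Fin n)) : Finset (Fin n × Fin n) := A.image Prod.swap

lemma mem_sw {A : Finset (Fin n × Fin n)} {p : Fin n × Fin n} :
    p ∈ sw A ↔ (p.2, p.1) ∈ A := by
  rw [sw, Finset.mem_image]
  constructor
  · rintro ⟨⟨x, y⟩, hq, rfl⟩; exact hq
  · intro h; exact ⟨(p.2, p.1), h, rfl⟩

lemma card_sw (A : Finset (Fin n × Fin n)) : (sw A).card = A.card :=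
  Finset.card_image_of_injective _ Prod.swap_injective

lemma pot_sw (A : Finset (Fin n × Fin n)) : pot (sw A) = pot A := by
  rw [pot, sw, Finset.sum_image (fun p _ q _ h => Prod.swap_injective h)]
  exact Finset.sum_congr rfl fun p _ => by simp [Nat.add_comm]

lemma op_sw (A : Finset (Fin n × Fin n)) : op (G □ G) (sw A) = op (G □ G) A := by
  rw [op, op]
  symm
  apply Finset.card_bij (fun x _ => (Prod.swap x.1, Prod.swap x.2))
  · rintro ⟨⟨a, b⟩, ⟨c, d⟩⟩ hx
    simp only [mem_filter, mem_univ, true_and, SimpleGraph.boxProd_adj] at hx ⊢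
    rw [mem_sw, mem_sw]
    simp only [Prod.swap_prod_mk]
    tauto
  · rintro ⟨⟨a, b⟩, ⟨c, d⟩⟩ - ⟨⟨a', b'⟩, ⟨c', d'⟩⟩ - h
    simp only [Prod.mk.injEq, Prod.swap_prod_mk] at h ⊢
    tauto
  · rintro ⟨⟨a, b⟩, ⟨c, d⟩⟩ hx
    refine ⟨((b, a), (d, c)), ?_, rfl⟩
    simp only [mem_filter, mem_univ, true_and, SimpleGraph.boxProd_adj] at hx ⊢
    rw [mem_sw, mem_sw] at hx
    simp only [Prod.swap_prod_mk] at hx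
    tauto

lemma Sec_sw_fst (A : Finset (Fin n × Fin n)) (a : Fin n) :
    Sec (sw A) a = (A.filter fun p => p.2 = a).image Prod.fst := by
  ext b
  rw [mem_Sec, mem_sw]
  simp only [Finset.mem_image, mem_filter]
  constructor
  · intro h; exact ⟨(b, a), ⟨h, rfl⟩, rfl⟩
  · rintro ⟨⟨x, y⟩, ⟨hA, rfl⟩, rfl⟩; exact hA

lemma filter_snd_card (A : Finset (Fin n × Fin n)) (a : Fin n) :
    (A.filter fun p => p.2 = a).card = (Sec (sw A) a).card := by
  rw [Sec_sw_fst]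
  symm
  apply Finset.card_image_of_injOn
  intro p hp q hq h
  exact Prod.ext h ((mem_filter.mp hp).2.trans (mem_filter.mp hq).2.symm)

lemma compressed_of {A : Finset (Fin n × Fin n)}
    (h1 : colComp A = A) (h2 : colComp (sw A) = sw A) : Compressed A := by
  intro a
  constructor
  · have h := (colComp_eq_iff.mp h1) a
    show Sec A a = univ.filter (fun x : Fin n => (x : ℕ) < (A.filter fun p => p.1 = a).card)
    rw [← Sec_card]
    exact h
  · have h := (colComp_eq_iff.mp h2) a
    rw [← Sec_sw_fst, filter_snd_card]
    exact h

lemma main_ind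
    (hopt : ∀ m : ℕ, m ≤ n →
      edgesIn G (Finset.univ.filter (fun x : Fin n => (x : ℕ) < m)) = maxEdges G m) :
    ∀ k (A : Finset (Fin n × Fin n)), pot A ≤ k →
      ∃ B, Compressed B ∧ B.card = A.card ∧ op (G □ G) A ≤ op (G □ G) B := by
  intro k
  induction k using Nat.strong_induction_on with
  | _ k IH =>
    intro A hA
    by_cases h1 : colComp A = A
    · by_cases h2 : colComp (sw A) = sw A
      · exact ⟨A, compressed_of h1 h2, rfl, le_rfl⟩
      · obtain ⟨B, hB1, hB2, hB3⟩ := IH (pot (sw (colComp (sw A))))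
          (by
            calc pot (sw (colComp (sw A))) = pot (colComp (sw A)) := pot_sw _
              _ < pot (sw A) := pot_colComp_lt h2
              _ = pot A := pot_sw A
              _ ≤ k := hA)
          _ le_rfl
        refine ⟨B, hB1, ?_, ?_⟩
        · rw [hB2, card_sw, card_colComp, card_sw]
        · calc op (G □ G) A = op (G □ G) (sw A) := (op_sw G A).symm
            _ ≤ op (G □ G) (colComp (sw A)) := op_colComp_le G hopt _
            _ = op (G □ G) (sw (colComp (sw A))) := (op_sw G _).symm
            _ ≤ op (G □ G) B := hB3
    · obtain ⟨B, hB1, hB2, hB3⟩ :=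
        IH (pot (colComp A)) (lt_of_lt_of_le (pot_colComp_lt h1) hA) _ le_rfl
      exact ⟨B, hB1, hB2.trans (card_colComp A),
        le_trans (op_colComp_le G hopt A) hB3⟩

end Main

end CompAux

/-- compression does not decrease the number of induced edges in `G × G`:
every set has a compressed set of the same size with at least as many induced edges, and
hence for every `m` there is a compressed optimal set of size `m` in `G × G`. -/
theorem exists_compressed_optimal {n : ℕ} (G : SimpleGraph (Fin n)) [DecidableRel G.Adj]
    [DecidableRel (G □ G).Adj]
    (hopt : ∀ m : ℕ, m ≤ n →
      edgesIn G (Finset.univ.filter (fun x : Fin n => (x : ℕ) < m)) = maxEdges G m) :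
    (∀ A : Finset (Fin n × Fin n), ∃ B : Finset (Fin n × Fin n),
      Compressed B ∧ B.card = A.card ∧ edgesIn (G □ G) A ≤ edgesIn (G □ G) B) ∧
    (∀ m : ℕ, m ≤ n * n → ∃ B : Finset (Fin n × Fin n),
      Compressed B ∧ B.card = m ∧ edgesIn (G □ G) B = maxEdges (G □ G) m) := by
  have part1 : ∀ A : Finset (Fin n × Fin n), ∃ B : Finset (Fin n × Fin n),
      Compressed B ∧ B.card = A.card ∧ edgesIn (G □ G) A ≤ edgesIn (G □ G) B := by
    intro A
    obtain ⟨B, h1, h2, h3⟩ := CompAux.main_ind G hopt (CompAux.pot A) A le_rfl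
    exact ⟨B, h1, h2, CompAux.edgesIn_le_edgesIn _ h3⟩
  refine ⟨part1, ?_⟩
  intro m hm
  have hcard : m ≤ (univ : Finset (Fin n × Fin n)).card := by
    rw [Finset.card_univ, Fintype.card_prod, Fintype.card_fin]
    simpa using hm
  obtain ⟨A0, hA0sub, hA0card⟩ := Finset.exists_subset_card_eq hcard
  have hne : ((univ : Finset (Fin n × Fin n)).powersetCard m).Nonempty :=
    ⟨A0, Finset.mem_powersetCard.mpr ⟨hA0sub, hA0card⟩⟩
  obtain ⟨A1, hA1mem, hA1sup⟩ :=
    Finset.exists_mem_eq_sup _ hne (fun A => edgesIn (G □ G) A)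
  obtain ⟨B, hB1, hB2, hB3⟩ := part1 A1
  have hA1card := (Finset.mem_powersetCard.mp hA1mem).2
  refine ⟨B, hB1, hB2.trans hA1card, le_antisymm ?_ ?_⟩
  · exact Finset.le_sup (f := fun A => edgesIn (G □ G) A)
      (Finset.mem_powersetCard.mpr ⟨subset_univ _, hB2.trans hA1card⟩)
  · exact le_trans (le_of_eq hA1sup) hB3
end

section
/- For odd p with p ≥ 9 or p = 5, let G = K_p - C_p be the complete graph on p vertices with the edges of a Hamiltonian cycle removed. Then the δ-sequence of G (which G admits nested solutions for) is (0, 1, 2, ..., (p-3)/2, (p-3)/2, (p-3)/2 + 1, ..., p - 3) — that is, the values 0 through (p-3)/2 followed by (p-3)/2 through p-3, with the value (p-3)/2 repeated. -/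
open Finset

/-- `K_p` minus a Hamiltonian cycle: `x` and `y` adjacent iff distinct and not consecutive
on the cycle `0, 1, …, p-1, 0`. -/
def cliqueMinusCycle (p : ℕ) : SimpleGraph (Fin p) where
  Adj x y := x ≠ y ∧ ¬(((x : ℕ) + 1) % p = (y : ℕ) ∨ ((y : ℕ) + 1) % p = (x : ℕ))
  symm := by
    constructor
    intro x y h
    exact ⟨h.1.symm, fun hc => h.2 hc.symm⟩
  loopless := by
    constructor
    intro x h
    exact h.1 rfl

instance (p : ℕ) : DecidableRel (cliqueMinusCycle p).Adj :=
  fun x y => decidable_of_iff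
    (x ≠ y ∧ ¬(((x : ℕ) + 1) % p = (y : ℕ) ∨ ((y : ℕ) + 1) % p = (x : ℕ))) Iff.rfl

namespace CMC
variable {p : ℕ}

def cyc [NeZero p] (A : Finset (Fin p)) : ℕ := (A.filter (fun i => i + 1 ∈ A)).card

lemma val_add_one [NeZero p] (h2 : 2 ≤ p) (x : Fin p) :
    ((x + 1 : Fin p) : ℕ) = ((x : ℕ) + 1) % p := by
  rw [Fin.val_add, Fin.val_one' p, Nat.mod_eq_of_lt h2]

lemma adj_iff [NeZero p] (h2 : 2 ≤ p) (x y : Fin p) :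
    (cliqueMinusCycle p).Adj x y ↔ x ≠ y ∧ x + 1 ≠ y ∧ y + 1 ≠ x := by
  have h1 : (x + 1 = y) ↔ ((x : ℕ) + 1) % p = (y : ℕ) := by
    rw [← val_add_one h2, Fin.val_eq_val]
  have h2' : (y + 1 = x) ↔ ((y : ℕ) + 1) % p = (x : ℕ) := by
    rw [← val_add_one h2, Fin.val_eq_val]
  show (x ≠ y ∧ ¬(_ ∨ _)) ↔ _
  rw [← h1, ← h2']
  tauto

lemma succ_val [NeZero p] (h2 : 2 ≤ p) (x : Fin p) :
    ((x + 1 : Fin p) : ℕ) = if (x : ℕ) + 1 = p then 0 else (x : ℕ) + 1 := by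
  rw [val_add_one h2]
  have := x.isLt
  split
  · rename_i h; rw [h, Nat.mod_self]
  · exact Nat.mod_eq_of_lt (by omega)

lemma succ_ne [NeZero p] (h2 : 2 ≤ p) (x : Fin p) : x + 1 ≠ x := by
  intro h
  have hv := succ_val h2 x
  rw [h] at hv
  have hlt := x.isLt
  split at hv <;> omega

lemma succ_succ_ne [NeZero p] (h3 : 3 ≤ p) (x : Fin p) : x + 1 + 1 ≠ x := by
  intro h
  have h1 := succ_val (by omega : 2 ≤ p) (x + 1)
  have h0 := succ_val (by omega : 2 ≤ p) x
  rw [h] at h1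
  have := x.isLt
  split at h1 <;> split at h0 <;> omega

lemma two_mul_choose_two (m : ℕ) : 2 * m.choose 2 = m * (m - 1) := by
  induction m with
  | zero => rfl
  | succ n ih =>
    rw [Nat.choose_succ_succ, Nat.choose_one_right, Nat.mul_add, ih]
    cases n with
    | zero => rfl
    | succ k => simp; ring

lemma edgesIn_add_cyc [NeZero p] (h3 : 3 ≤ p) (A : Finset (Fin p)) :
    edgesIn (cliqueMinusCycle p) A + cyc A = A.card.choose 2 := by
  set G := cliqueMinusCycle p with hG
  have h2 : 2 ≤ p := by omega
  set E := G.edgeFinset.filter (fun e => ∀ v ∈ e, v ∈ A) with hE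
  set N := A.offDiag.filter (fun q => G.Adj q.1 q.2) with hN
  set M := A.offDiag.filter (fun q => ¬ G.Adj q.1 q.2) with hM
  have hNcard : N.card = 2 * E.card := by
    have Hf : ∀ q ∈ N, Sym2.mk q.1 q.2 ∈ E := by
      rintro ⟨a, b⟩ hq
      simp only [hN, mem_filter, mem_offDiag] at hq
      obtain ⟨⟨ha, hb, hne⟩, hadj⟩ := hq
      simp only [hE, mem_filter, SimpleGraph.mem_edgeFinset, SimpleGraph.mem_edgeSet,
        Sym2.mem_iff]
      exact ⟨hadj, by rintro v (rfl | rfl) <;> assumption⟩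
    rw [Finset.card_eq_sum_card_fiberwise Hf]
    rw [Finset.sum_congr rfl (fun e he => ?_), Finset.sum_const, smul_eq_mul, mul_comm]
    induction e using Sym2.ind with
    | _ x y =>
      simp only [hE, mem_filter, SimpleGraph.mem_edgeFinset, SimpleGraph.mem_edgeSet,
        Sym2.mem_iff] at he
      obtain ⟨hadj, hmem⟩ := he
      have hx : x ∈ A := hmem x (Or.inl rfl)
      have hy : y ∈ A := hmem y (Or.inr rfl)
      have hne : x ≠ y := hadj.ne
      have heq : N.filter (fun q => Sym2.mk q.1 q.2 = s(x, y)) = {(x, y), (y, x)} := by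
        ext ⟨a, b⟩
        simp only [hN, mem_filter, mem_offDiag, mem_insert, mem_singleton, Prod.mk.injEq,
          Sym2.eq_iff]
        constructor
        · rintro ⟨-, (⟨rfl, rfl⟩ | ⟨rfl, rfl⟩)⟩
          · exact Or.inl ⟨rfl, rfl⟩
          · exact Or.inr ⟨rfl, rfl⟩
        · rintro (⟨rfl, rfl⟩ | ⟨rfl, rfl⟩)
          · exact ⟨⟨⟨hx, hy, hne⟩, hadj⟩, Or.inl ⟨rfl, rfl⟩⟩
          · exact ⟨⟨⟨hy, hx, hne.symm⟩, hadj.symm⟩, Or.inr ⟨rfl, rfl⟩⟩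
      rw [heq]
      rw [Finset.card_insert_of_notMem, Finset.card_singleton]
      simp only [mem_singleton, Prod.mk.injEq, not_and]
      intro h; exact absurd h hne
  have hMcard : M.card = 2 * cyc A := by
    have Hf : ∀ q ∈ M, (if q.1 + 1 = q.2 then q.1 else q.2) ∈ A.filter (fun i => i + 1 ∈ A) := by
      rintro ⟨a, b⟩ hq
      simp only [hM, mem_filter, mem_offDiag] at hq
      obtain ⟨⟨ha, hb, hne⟩, hnadj⟩ := hq
      rw [adj_iff h2] at hnadj
      simp only [mem_filter]
      by_cases hab : a + 1 = b
      · simp only [hab, if_pos]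
        exact ⟨ha, hab ▸ hb⟩
      · have hba : b + 1 = a := by tauto
        simp only [if_neg hab]
        exact ⟨hb, hba ▸ ha⟩
    rw [Finset.card_eq_sum_card_fiberwise Hf]
    rw [Finset.sum_congr rfl (fun i hi => ?_), Finset.sum_const, smul_eq_mul, mul_comm]
    · rfl
    simp only [mem_filter] at hi
    obtain ⟨hiA, hi1A⟩ := hi
    have hne1 : i + 1 ≠ i := succ_ne h2 i
    have heq : M.filter (fun q => (if q.1 + 1 = q.2 then q.1 else q.2) = i)
        = {(i, i + 1), (i + 1, i)} := by
      ext ⟨a, b⟩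
      simp only [hM, mem_filter, mem_offDiag, mem_insert, mem_singleton, Prod.mk.injEq]
      constructor
      · rintro ⟨⟨⟨ha, hb, hne⟩, hnadj⟩, hg⟩
        rw [adj_iff h2] at hnadj
        by_cases hab : a + 1 = b
        · rw [if_pos hab] at hg
          subst hg
          exact Or.inl ⟨rfl, hab.symm⟩
        · have hba : b + 1 = a := by tauto
          rw [if_neg hab] at hg
          subst hg
          exact Or.inr ⟨hba.symm, rfl⟩
      · rintro (⟨rfl, rfl⟩ | ⟨rfl, rfl⟩)
        · refine ⟨⟨⟨hiA, hi1A, hne1.symm⟩, ?_⟩, if_pos rfl⟩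
          rw [adj_iff h2]
          exact fun h => h.2.1 rfl
        · refine ⟨⟨⟨hi1A, hiA, hne1⟩, ?_⟩, ?_⟩
          · rw [adj_iff h2]
            exact fun h => h.2.2 rfl
          · rw [if_neg (succ_succ_ne h3 _)]
    rw [heq, Finset.card_insert_of_notMem, Finset.card_singleton]
    simp only [mem_singleton, Prod.mk.injEq, not_and]
    intro h
    exact absurd h.symm hne1
  have hsplit : N.card + M.card = A.card * A.card - A.card := by
    rw [hN, hM, Finset.card_filter_add_card_filter_not, Finset.offDiag_card]
  have h2c := two_mul_choose_two A.card
  have hmul : A.card * (A.card - 1) = A.card * A.card - A.card := by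
    cases h : A.card with
    | zero => rfl
    | succ k => rw [Nat.succ_sub_one, Nat.mul_succ, Nat.add_sub_cancel]
  have hEE : edgesIn (cliqueMinusCycle p) A = #E := by
    unfold edgesIn
    congr!
  omega

lemma card_le_cyc [NeZero p] (A : Finset (Fin p)) :
    A.card ≤ cyc A + (p - A.card) := by
  have hsplit := Finset.card_filter_add_card_filter_not
    (s := A) (p := fun i => i + 1 ∈ A)
  have hD : (A.filter (fun i => ¬ (i + 1 ∈ A))).card ≤ Aᶜ.card := by
    apply Finset.card_le_card_of_injOn (fun i => i + 1)
    · intro i hi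
      simp only [coe_filter, mem_coe, mem_filter, Set.mem_setOf_eq] at hi
      simpa [Finset.mem_compl] using hi.2
    · intro a _ b _ hab
      exact add_right_cancel hab
  have hc : Aᶜ.card = p - A.card := by
    rw [Finset.card_compl, Fintype.card_fin]
  unfold cyc
  omega

lemma cyc_of_indep [NeZero p] (A : Finset (Fin p)) (h : ∀ i ∈ A, i + 1 ∉ A) :
    cyc A = 0 := by
  unfold cyc
  rw [Finset.card_eq_zero, Finset.filter_eq_empty_iff]
  exact h

lemma cyc_of_coindep [NeZero p] (A : Finset (Fin p)) (h : ∀ i, i ∉ A → i + 1 ∈ A) :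
    cyc A + (p - A.card) = A.card := by
  have hsplit := Finset.card_filter_add_card_filter_not
    (s := A) (p := fun i => i + 1 ∈ A)
  have hD : (A.filter (fun i => ¬ (i + 1 ∈ A))).card = Aᶜ.card := by
    refine Finset.card_bij' (i := fun i _ => i + 1) (j := fun x _ => x - 1)
      (hi := ?_) (hj := ?_) (left_inv := ?_) (right_inv := ?_)
    · intro i hi
      simp only [mem_filter] at hi
      simpa [Finset.mem_compl] using hi.2
    · intro x hx
      simp only [Finset.mem_compl] at hx
      simp only [mem_filter]
      have hx1 : x - 1 + 1 = x := sub_add_cancel x 1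
      constructor
      · by_contra hna
        exact hx (hx1 ▸ h _ hna)
      · rw [hx1]; exact hx
    · intro a _
      exact add_sub_cancel_right a 1
    · intro x _
      exact sub_add_cancel x 1
  have hc : Aᶜ.card = p - A.card := by
    rw [Finset.card_compl, Fintype.card_fin]
  have hle : A.card ≤ p := by
    simpa using Finset.card_le_card (Finset.subset_univ A)
  unfold cyc
  omega

def fnat (p j : ℕ) : ℕ :=
  if j < (p - 1) / 2 then 2 * j
  else if j = (p - 1) / 2 then p - 1
  else 2 * (j - (p - 1) / 2) - 1

lemma fnat_lt (hp : 5 ≤ p) {j : ℕ} (hj : j < p) : fnat p j < p := by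
  unfold fnat
  split
  · omega
  split <;> omega

def ordFn (p : ℕ) [NeZero p] (j : Fin p) : Fin p :=
  ⟨fnat p j % p, Nat.mod_lt _ (Nat.pos_of_ne_zero (NeZero.ne p))⟩

lemma ordFn_val [NeZero p] (hp : 5 ≤ p) (j : Fin p) :
    (ordFn p j : ℕ) = fnat p (j : ℕ) := Nat.mod_eq_of_lt (fnat_lt hp j.isLt)

lemma ordFn_inj [NeZero p] (hp : 5 ≤ p) (hodd : p % 2 = 1) :
    Function.Injective (ordFn p) := by
  intro a b hab
  have ha := ordFn_val hp a
  have hb := ordFn_val hp b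
  rw [hab] at ha
  have h : fnat p (a : ℕ) = fnat p (b : ℕ) := by omega
  have hav := a.isLt
  have hbv := b.isLt
  apply Fin.ext
  unfold fnat at h
  split_ifs at h <;> omega

lemma ordFn_bij [NeZero p] (hp : 5 ≤ p) (hodd : p % 2 = 1) :
    Function.Bijective (ordFn p) :=
  Finite.injective_iff_bijective.mp (ordFn_inj hp hodd)

def Pref (p : ℕ) [NeZero p] (m : ℕ) : Finset (Fin p) :=
  (Finset.univ.filter (fun j : Fin p => (j : ℕ) < m)).image (ordFn p)

lemma card_filter_lt [NeZero p] {m : ℕ} (hm : m ≤ p) :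
    (Finset.univ.filter (fun j : Fin p => (j : ℕ) < m)).card = m := by
  rw [← Finset.card_range m]
  apply Finset.card_nbij (i := Fin.val)
  · intro a ha
    simp only [coe_filter, mem_coe, mem_filter, mem_univ, true_and, Set.mem_setOf_eq] at ha
    simpa using ha
  · exact Fin.val_injective.injOn
  · intro k hk
    simp only [Finset.coe_range, Set.mem_Iio] at hk
    exact ⟨⟨k, lt_of_lt_of_le hk hm⟩, by simp [hk], rfl⟩

lemma card_Pref [NeZero p] (hp : 5 ≤ p) (hodd : p % 2 = 1) {m : ℕ} (hm : m ≤ p) :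
    (Pref p m).card = m := by
  unfold Pref
  rw [Finset.card_image_of_injective _ (ordFn_inj hp hodd), card_filter_lt hm]

lemma mem_Pref [NeZero p] {m : ℕ} {x : Fin p} :
    x ∈ Pref p m ↔ ∃ j : Fin p, (j : ℕ) < m ∧ ordFn p j = x := by
  unfold Pref
  simp [Finset.mem_image]

lemma Pref_indep [NeZero p] (hp : 5 ≤ p) (hodd : p % 2 = 1) {m : ℕ}
    (hm : m ≤ (p - 1) / 2) : ∀ x ∈ Pref p m, x + 1 ∉ Pref p m := by
  intro x hx hx1
  obtain ⟨j, hj, rfl⟩ := mem_Pref.mp hx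
  obtain ⟨j', hj', he⟩ := mem_Pref.mp hx1
  have e1 := ordFn_val hp j
  have e2 := ordFn_val hp j'
  have hs := succ_val (by omega : 2 ≤ p) (ordFn p j)
  have hjl := j.isLt
  have hj'l := j'.isLt
  have hfj : fnat p (j : ℕ) = 2 * (j : ℕ) := if_pos (by omega)
  have hfj' : fnat p (j' : ℕ) = 2 * (j' : ℕ) := if_pos (by omega)
  have hev : ((ordFn p j + 1 : Fin p) : ℕ) = 2 * (j : ℕ) + 1 := by
    rw [hs, if_neg (by omega)]
    omega
  rw [he] at e2
  omega

lemma Pref_coindep [NeZero p] (hp : 5 ≤ p) (hodd : p % 2 = 1) {m : ℕ}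
    (hm1 : (p - 1) / 2 < m) : ∀ i, i ∉ Pref p m → i + 1 ∈ Pref p m := by
  have hbij := ordFn_bij hp hodd
  have key : ∀ i : Fin p, i ∉ Pref p m → ∃ j : Fin p, m ≤ (j : ℕ) ∧ ordFn p j = i := by
    intro i hi
    obtain ⟨j, hj⟩ := hbij.surjective i
    refine ⟨j, ?_, hj⟩
    by_contra hcon
    exact hi (mem_Pref.mpr ⟨j, by omega, hj⟩)
  intro i hi
  by_contra hni
  obtain ⟨j, hjm, hj⟩ := key i hi
  obtain ⟨j', hj'm, hj'⟩ := key (i + 1) hni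
  have e1 := ordFn_val hp j
  have e2 := ordFn_val hp j'
  rw [hj] at e1
  rw [hj'] at e2
  have hjl := j.isLt
  have hj'l := j'.isLt
  have hfj : fnat p (j : ℕ) = 2 * ((j : ℕ) - (p - 1) / 2) - 1 := by
    unfold fnat
    rw [if_neg (by omega), if_neg (by omega)]
  have hfj' : fnat p (j' : ℕ) = 2 * ((j' : ℕ) - (p - 1) / 2) - 1 := by
    unfold fnat
    rw [if_neg (by omega), if_neg (by omega)]
  have hs := succ_val (by omega : 2 ≤ p) i
  have hil := i.isLt
  split at hs <;> omega

lemma edges_Pref [NeZero p] (hp : 5 ≤ p) (hodd : p % 2 = 1) {m : ℕ} (hm : m ≤ p) :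
    edgesIn (cliqueMinusCycle p) (Pref p m) = m.choose 2 - (2 * m - p) := by
  have key := edgesIn_add_cyc (by omega : 3 ≤ p) (Pref p m)
  rw [card_Pref hp hodd hm] at key
  by_cases hsm : m ≤ (p - 1) / 2
  · have hz := cyc_of_indep (Pref p m) (Pref_indep hp hodd hsm)
    omega
  · have hc := cyc_of_coindep (Pref p m) (Pref_coindep hp hodd (by omega))
    rw [card_Pref hp hodd hm] at hc
    omega

lemma edges_le [NeZero p] (hp : 5 ≤ p) {m : ℕ} (A : Finset (Fin p)) (hA : A.card = m) :
    edgesIn (cliqueMinusCycle p) A ≤ m.choose 2 - (2 * m - p) := by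
  have key := edgesIn_add_cyc (by omega : 3 ≤ p) A
  have hle := card_le_cyc A
  rw [hA] at key hle
  have hmp : m ≤ p := by
    rw [← hA]
    simpa using Finset.card_le_card (Finset.subset_univ A)
  omega

lemma maxEdges_eq [NeZero p] (hp : 5 ≤ p) (hodd : p % 2 = 1) {m : ℕ} (hm : m ≤ p) :
    maxEdges (cliqueMinusCycle p) m = m.choose 2 - (2 * m - p) := by
  apply le_antisymm
  · apply Finset.sup_le
    intro A hA
    rw [Finset.mem_powersetCard] at hA
    exact edges_le hp A hA.2
  · have hmem : Pref p m ∈ (Finset.univ : Finset (Fin p)).powersetCard m :=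
      Finset.mem_powersetCard.mpr ⟨Finset.subset_univ _, card_Pref hp hodd hm⟩
    calc m.choose 2 - (2 * m - p) = edgesIn (cliqueMinusCycle p) (Pref p m) :=
          (edges_Pref hp hodd hm).symm
      _ ≤ _ := Finset.le_sup hmem

lemma choose_two_succ (n : ℕ) : (n + 1).choose 2 = n.choose 2 + n := by
  have h := Nat.choose_succ_succ n 1
  rw [Nat.choose_one_right] at h
  norm_num at h ⊢
  omega

lemma le_choose_two : ∀ n : ℕ, 3 ≤ n → n ≤ n.choose 2 := by
  intro n
  induction n with
  | zero => omega
  | succ k ih =>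
    intro h
    rw [choose_two_succ]
    rcases Nat.lt_or_ge k 3 with h3 | h3
    · interval_cases k <;> simp_all <;> omega
    · have := ih h3
      omega

end CMC

/-- for odd `p` with `p ≥ 9` or `p = 5`, the graph `K_p - C_p` admits an
optimal order, and its `δ`-sequence is
`(0, 1, …, (p-3)/2, (p-3)/2, (p-3)/2 + 1, …, p-3)`. -/
theorem cliqueMinusCycle_delta (p : ℕ) (hodd : Odd p) (hp : 9 ≤ p ∨ p = 5) :
    (∀ m : ℕ, 1 ≤ m → m ≤ (p - 1) / 2 →
        deltaSeq (cliqueMinusCycle p) m = (m : ℤ) - 1) ∧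
    deltaSeq (cliqueMinusCycle p) ((p + 1) / 2) = ((p + 1) / 2 : ℕ) - (2 : ℤ) ∧
    (∀ m : ℕ, (p + 3) / 2 ≤ m → m ≤ p →
        deltaSeq (cliqueMinusCycle p) m = (m : ℤ) - 3) ∧
    ∃ ord : Fin p ≃ Fin p,
      ∀ m : ℕ, m ≤ p →
        edgesIn (cliqueMinusCycle p)
            ((Finset.univ.filter (fun j : Fin p => (j : ℕ) < m)).image ord)
          = maxEdges (cliqueMinusCycle p) m := by
  have hp5 : 5 ≤ p := by rcases hp with h | h <;> omega
  have hodd' : p % 2 = 1 := Nat.odd_iff.mp hodd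
  haveI : NeZero p := ⟨by omega⟩
  refine ⟨?_, ?_, ?_, ?_⟩
  · intro m h1 h2
    unfold deltaSeq
    rw [CMC.maxEdges_eq hp5 hodd' (by omega : m ≤ p),
      CMC.maxEdges_eq hp5 hodd' (by omega : m - 1 ≤ p)]
    obtain ⟨n, rfl⟩ : ∃ n, m = n + 1 := ⟨m - 1, by omega⟩
    have hc := CMC.choose_two_succ n
    simp only [Nat.add_sub_cancel]
    omega
  · unfold deltaSeq
    rw [CMC.maxEdges_eq hp5 hodd' (by omega : (p + 1) / 2 ≤ p),
      CMC.maxEdges_eq hp5 hodd' (by omega : (p + 1) / 2 - 1 ≤ p)]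
    have hm : (p + 1) / 2 = (p - 1) / 2 + 1 := by omega
    have hc := CMC.choose_two_succ ((p - 1) / 2)
    rw [hm]
    simp only [Nat.add_sub_cancel]
    omega
  · intro m h1 h2
    unfold deltaSeq
    rw [CMC.maxEdges_eq hp5 hodd' (by omega : m ≤ p),
      CMC.maxEdges_eq hp5 hodd' (by omega : m - 1 ≤ p)]
    obtain ⟨n, rfl⟩ : ∃ n, m = n + 1 := ⟨m - 1, by omega⟩
    have hc := CMC.choose_two_succ n
    have hn3 : 3 ≤ n := by omega
    have hle := CMC.le_choose_two n hn3
    simp only [Nat.add_sub_cancel]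
    omega
  · refine ⟨Equiv.ofBijective (CMC.ordFn p) (CMC.ordFn_bij hp5 hodd'), ?_⟩
    intro m hm
    have hcoe : ⇑(Equiv.ofBijective (CMC.ordFn p) (CMC.ordFn_bij hp5 hodd')) = CMC.ordFn p :=
      rfl
    rw [hcoe]
    rw [show (Finset.univ.filter (fun j : Fin p => (j : ℕ) < m)).image (CMC.ordFn p)
        = CMC.Pref p m from rfl]
    rw [CMC.edges_Pref hp5 hodd' hm, CMC.maxEdges_eq hp5 hodd' hm]
end
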